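/- arXiv:1110.4241 — 8 statements merged into one kernel-verified Lean document; each statement's English description precedes it below -/
import Mathlib

section
/- Assume each μ_j is nonatomic. Then the maxmin value equals the minimum of g over the simplex: sup over all m-partitions (A_1,…,A_m) of C of min_{j=1..m} μ_j(A_j) = inf_{α ∈ Δ_{m−1}} g(α), where g(α) := ∫_C max_{j=1..m} α_j f_j(x) dν(x). -/
/-!
Weak duality: for a partition `A` and weights `α` in the simplex,
`min_j μ_j(A_j) ≤ ∑_j α_j μ_j(A_j) = ∑_j ∫_{A_j} α_j f_j ≤ ∫ max_j α_j f_j`.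

Strong duality: replace each `f_j` by a simple function `φ_j ≤ f_j` with `∫ (f_j - φ_j)` small.
On the finitely many cells where `(φ_j)_j` is constant the problem becomes a finite zero-sum game,
and its minimax theorem (a Hahn–Banach separation) gives proportions `θ` in which to share each
cell among the `j` so that every `μ_j` receives almost `inf g`. Where some `φ_j` is positive on a
cell, `ν` is equivalent there to the nonatomic `μ_j`, so by Sierpiński's intermediate value
theorem the cell can be cut in exactly these proportions.
-/

open MeasureTheory Set Function
open scoped ENNReal NNReal

theorem nonempty_of_mem_stdSimplex {𝕜 ι : Type*} [Semiring 𝕜] [PartialOrder 𝕜] [Nontrivial 𝕜]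
    [Fintype ι] {θ : ι → 𝕜} (hθ : θ ∈ stdSimplex 𝕜 ι) : Nonempty ι := by
  by_contra! hι
  simp [stdSimplex_of_isEmpty_index] at hθ

/-- Hahn–Banach separates `K` from the orthant `{y | ∀ j, τ ≤ y j}`; since the orthant is
unbounded upwards in every coordinate, the separating functional has nonnegative coefficients,
which we normalize. -/
theorem exists_mem_stdSimplex_forall_sum_mul_lt {ι : Type*} [Fintype ι] {K : Set (ι → ℝ)}
    (hKc : Convex ℝ K) (hK : IsCompact K) (hne : K.Nonempty) {τ : ℝ}
    (hτ : ∀ y ∈ K, ∃ j, y j < τ) : ∃ β ∈ stdSimplex ℝ ι, ∀ y ∈ K, ∑ j, β j * y j < τ := by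
  classical
  have hdisj : Disjoint K (univ.pi fun _ => Ici τ) := disjoint_left.2 fun y hy hQ => by
    obtain ⟨j, hj⟩ := hτ y hy
    exact hj.not_ge (hQ j (mem_univ j))
  obtain ⟨φ, u, v, hu, huv, hv⟩ := geometric_hahn_banach_compact_closed hKc hK
    (convex_pi fun _ _ => convex_Ici τ) (isClosed_set_pi fun _ _ => isClosed_Ici) hdisj
  set β : ι → ℝ := fun j => φ fun i => if j = i then 1 else 0
  have hφ (y : ι → ℝ) : φ y = ∑ j, y j * β j := φ.toLinearMap.pi_apply_eq_sum_univ y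
  have hτv : v < τ * ∑ j, β j := by
    simpa [hφ, Finset.mul_sum] using hv (fun _ => τ) fun _ _ => self_mem_Ici
  have hβ_nonneg (j : ι) : 0 ≤ β j := by
    by_contra! hj
    have hq := hv ((fun _ => τ) + Pi.single j ((τ * ∑ i, β i - v) / -β j)) fun i _ => by
      rcases eq_or_ne i j with rfl | hij
      · simp only [Pi.add_apply, Pi.single_eq_same, mem_Ici, le_add_iff_nonneg_right]
        exact div_nonneg (by linarith) (by linarith)
      · simp [hij]
    rw [map_add, hφ, hφ (Pi.single j _)] at hq
    simp only [Pi.single_apply, ite_mul, zero_mul, Finset.sum_ite_eq', Finset.mem_univ,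
      if_true, ← Finset.mul_sum] at hq
    rw [div_neg, neg_mul, div_mul_cancel₀ _ hj.ne] at hq
    linarith
  have hS : 0 < ∑ j, β j := by
    refine (Finset.sum_nonneg fun j _ => hβ_nonneg j).lt_of_ne fun hS => ?_
    obtain ⟨y₀, hy₀⟩ := hne
    have hφ₀ : φ y₀ = 0 := by
      rw [hφ]
      exact Finset.sum_eq_zero fun j _ => by
        rw [(Finset.sum_eq_zero_iff_of_nonneg fun i _ => hβ_nonneg i).1 hS.symm j
          (Finset.mem_univ j), mul_zero]
    linarith [hu y₀ hy₀, hS ▸ hτv]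
  refine ⟨fun j => β j / ∑ i, β i, ⟨fun j => div_nonneg (hβ_nonneg j) hS.le, ?_⟩, fun y hy => ?_⟩
  · rw [← Finset.sum_div, div_self hS.ne']
  · have hy := hu y hy
    rw [hφ] at hy
    calc ∑ j, β j / (∑ i, β i) * y j = (∑ j, y j * β j) / ∑ i, β i := by
          rw [Finset.sum_div]
          exact Finset.sum_congr rfl fun j _ => by ring
      _ < τ := by
          rw [div_lt_iff₀ hS]
          linarith

theorem exists_forall_le_sum_mul_of_forall_le_sum_iSup {κ ι : Type*} [Fintype κ] [Fintype ι]
    [Nonempty ι] (w : κ → ι → ℝ) {τ : ℝ} (hτ : ∀ β ∈ stdSimplex ℝ ι, τ ≤ ∑ c, ⨆ j, β j * w c j) :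
    ∃ θ : κ → ι → ℝ, (∀ c, θ c ∈ stdSimplex ℝ ι) ∧ ∀ j, τ ≤ ∑ c, θ c j * w c j := by
  classical
  by_contra! H
  let L : (κ → ι → ℝ) →ₗ[ℝ] ι → ℝ :=
    { toFun := fun θ j => ∑ c, θ c j * w c j
      map_add' := fun θ θ' => by ext j; simp [add_mul, Finset.sum_add_distrib]
      map_smul' := fun a θ => by ext j; simp [Finset.mul_sum, mul_assoc] }
  obtain ⟨β, hβ, hβL⟩ := exists_mem_stdSimplex_forall_sum_mul_lt
    ((convex_pi fun _ _ => convex_stdSimplex ℝ ι).linear_image L)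
    ((isCompact_univ_pi fun _ => isCompact_stdSimplex ℝ ι).image L.continuous_of_finiteDimensional)
    ⟨_, _, fun _ _ => single_mem_stdSimplex ℝ (Classical.arbitrary ι), rfl⟩
    (by rintro _ ⟨θ, hθ, rfl⟩; exact H θ fun c => hθ c (mem_univ c))
  choose jc hjc using fun c => exists_eq_ciSup_of_finite (f := fun j => β j * w c j)
  have hmax : ∑ j, β j * L (fun c => Pi.single (jc c) 1) j = ∑ c, ⨆ j, β j * w c j := by
    simp only [L, LinearMap.coe_mk, AddHom.coe_mk, Finset.mul_sum]
    rw [Finset.sum_comm]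
    refine Finset.sum_congr rfl fun c _ => ?_
    simp [Pi.single_apply, hjc c]
  linarith [hτ β hβ, hβL _ ⟨_, fun c _ => single_mem_stdSimplex ℝ (jc c), rfl⟩]

namespace MeasureTheory

variable {C : Type*} [MeasurableSpace C]

def Measure.Nonatomic (μ : Measure C) : Prop :=
  ∀ A, MeasurableSet A → 0 < μ A → ∃ B, MeasurableSet B ∧ B ⊆ A ∧ 0 < μ B ∧ 0 < μ (A \ B)

structure IsMeasurablePartition {ι : Type*} (A : ι → Set C) (T : Set C) : Prop where
  measurableSet : ∀ i, MeasurableSet (A i)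
  pairwise_disjoint : Pairwise (Disjoint on A)
  iUnion_eq : ⋃ i, A i = T

namespace IsMeasurablePartition

variable {ι κ : Type*} {T : Set C}

theorem subset {A : ι → Set C} (hA : IsMeasurablePartition A T) (i : ι) : A i ⊆ T :=
  hA.iUnion_eq ▸ subset_iUnion A i

theorem ite [DecidableEq ι] (i₀ : ι) (hT : MeasurableSet T) :
    IsMeasurablePartition (fun i => if i = i₀ then T else ∅) T where
  measurableSet i := by split_ifs <;> simp [hT]
  pairwise_disjoint i j hij := by
    simp only [Function.onFun]
    split_ifs <;> simp_all
  iUnion_eq := by ext x; simp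

theorem cons {k : ℕ} {B₀ : Set C} {B : Fin k → Set C} (hB₀ : MeasurableSet B₀) (hB₀T : B₀ ⊆ T)
    (hB : IsMeasurablePartition B (T \ B₀)) :
    IsMeasurablePartition (Fin.cons B₀ B : Fin (k + 1) → Set C) T where
  measurableSet := Fin.cases hB₀ hB.measurableSet
  pairwise_disjoint := by
    have h₀ : ∀ i, Disjoint B₀ (B i) := fun i => disjoint_sdiff_right.mono_right (hB.subset i)
    intro i j hij
    cases i using Fin.cases <;> cases j using Fin.cases
    · exact absurd rfl hij
    · exact h₀ _
    · exact (h₀ _).symm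
    · exact hB.pairwise_disjoint (fun h => hij (congrArg Fin.succ h))
  iUnion_eq := by
    rw [← union_sdiff_cancel hB₀T, ← hB.iUnion_eq]
    ext x
    simp

theorem comp_equiv {A : ι → Set C} (hA : IsMeasurablePartition A T) (e : κ ≃ ι) :
    IsMeasurablePartition (A ∘ e) T where
  measurableSet i := hA.measurableSet (e i)
  pairwise_disjoint i j hij := hA.pairwise_disjoint (e.injective.ne hij)
  iUnion_eq := by rw [← hA.iUnion_eq]; exact e.iSup_comp (g := A)

theorem iUnion_of_refinement [Countable κ] {P : κ → Set C} (hP : IsMeasurablePartition P T)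
    {B : κ → ι → Set C} (hB : ∀ c, IsMeasurablePartition (B c) (P c)) :
    IsMeasurablePartition (fun i => ⋃ c, B c i) T where
  measurableSet i := .iUnion fun c => (hB c).measurableSet i
  pairwise_disjoint i j hij := by
    refine disjoint_iUnion_left.2 fun c => disjoint_iUnion_right.2 fun c' => ?_
    obtain rfl | hcc := eq_or_ne c c'
    · exact (hB c).pairwise_disjoint hij
    · exact (hP.pairwise_disjoint hcc).mono ((hB c).subset i) ((hB c').subset j)
  iUnion_eq := by
    rw [iUnion_comm]
    simp_rw [(hB _).iUnion_eq]
    exact hP.iUnion_eq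

end IsMeasurablePartition

theorem exists_subset_measure_le_forall_le_two_mul (ν : Measure C) (S : Set C) {b : ℝ≥0∞}
    (hb : b ≠ ∞) : ∃ E ⊆ S, MeasurableSet E ∧ ν E ≤ b ∧
      ∀ E' ⊆ S, MeasurableSet E' → ν E' ≤ b → ν E' ≤ 2 * ν E := by
  set s := ⨆ (E' : Set C) (_ : E' ⊆ S ∧ MeasurableSet E' ∧ ν E' ≤ b), ν E'
  have hle : ∀ E' ⊆ S, MeasurableSet E' → ν E' ≤ b → ν E' ≤ s := fun E' hE'S hE' hE'b =>
    le_iSup₂ (f := fun E' (_ : E' ⊆ S ∧ MeasurableSet E' ∧ ν E' ≤ b) => ν E') E' ⟨hE'S, hE', hE'b⟩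
  by_cases hs : s = 0
  · exact ⟨∅, empty_subset S, .empty, by simp, fun E' hE'S hE' hE'b => by
      simpa [hs] using hle E' hE'S hE' hE'b⟩
  have hs_top : s ≠ ∞ := ne_top_of_le_ne_top hb (iSup₂_le fun _ h => h.2.2)
  obtain ⟨E, hsE⟩ := lt_iSup_iff.1 (ENNReal.half_lt_self hs hs_top)
  obtain ⟨⟨hES, hE, hEb⟩, hsE⟩ := lt_iSup_iff.1 hsE
  refine ⟨E, hES, hE, hEb, fun E' hE'S hE' hE'b => (hle E' hE'S hE' hE'b).trans ?_⟩
  rw [← ENNReal.div_le_iff' (by norm_num) (by norm_num)]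
  exact hsE.le

namespace Measure.Nonatomic

variable {ν μ : Measure C}

theorem restrict (h : ν.Nonatomic) {T : Set C} (hT : MeasurableSet T) :
    (ν.restrict T).Nonatomic := by
  intro A hA hpos
  rw [ν.restrict_apply hA] at hpos
  obtain ⟨B, hB, hBA, hB₁, hB₂⟩ := h (A ∩ T) (hA.inter hT) hpos
  refine ⟨B, hB, hBA.trans inter_subset_left, ?_, ?_⟩
  · rwa [ν.restrict_apply hB, inter_eq_self_of_subset_left (hBA.trans inter_subset_right)]
  · rwa [ν.restrict_apply (hA.diff hB), ← inter_sdiff_right_comm]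

theorem of_absolutelyContinuous (h : μ.Nonatomic) (hνμ : ν ≪ μ) (hμν : μ ≪ ν) :
    ν.Nonatomic := by
  intro A hA hpos
  obtain ⟨B, hB, hBA, hB₁, hB₂⟩ := h A hA (pos_of_ne_zero fun h₀ => hpos.ne' (hνμ h₀))
  exact ⟨B, hB, hBA, pos_of_ne_zero fun h₀ => hB₁.ne' (hμν h₀),
    pos_of_ne_zero fun h₀ => hB₂.ne' (hμν h₀)⟩

variable [IsFiniteMeasure ν]

/-- The infimum of the positive masses below `A` is `0`: otherwise split a set of mass less than
twice the infimum. -/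
theorem exists_pos_measure_lt (h : ν.Nonatomic) {A : Set C} (hA : MeasurableSet A)
    (hpos : 0 < ν A) {ε : ℝ≥0∞} (hε : 0 < ε) :
    ∃ B ⊆ A, MeasurableSet B ∧ 0 < ν B ∧ ν B < ε := by
  by_contra! H
  set s := ⨅ (B : Set C) (_ : B ⊆ A ∧ MeasurableSet B ∧ 0 < ν B), ν B
  have hs : ∀ B ⊆ A, MeasurableSet B → 0 < ν B → s ≤ ν B := fun B hBA hB hB₀ =>
    iInf₂_le (f := fun B (_ : B ⊆ A ∧ MeasurableSet B ∧ 0 < ν B) => ν B) B ⟨hBA, hB, hB₀⟩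
  have hs₀ : s ≠ 0 := (hε.trans_le (le_iInf₂ fun B hB => H B hB.1 hB.2.1 hB.2.2)).ne'
  have hs_top : s ≠ ∞ := ne_top_of_le_ne_top (measure_ne_top ν A) (hs A subset_rfl hA hpos)
  obtain ⟨B, hBs⟩ := iInf_lt_iff.1 (ENNReal.lt_add_right hs_top hs₀)
  obtain ⟨⟨hBA, hB, hB₀⟩, hBs⟩ := iInf_lt_iff.1 hBs
  obtain ⟨B', hB', hB'B, hB'₀, hBB'₀⟩ := h B hB hB₀
  have hsplit : ν B' + ν (B \ B') = ν B := by
    rw [measure_add_sdiff hB'.nullMeasurableSet, union_eq_self_of_subset_left hB'B]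
  exact (add_le_add (hs B' (hB'B.trans hBA) hB' hB'₀)
    (hs _ (sdiff_subset.trans hBA) (hB.diff hB') hBB'₀)).not_gt (hsplit ▸ hBs)

/-- Greedy exhaustion: add to `B n` a set of at least half the largest admissible mass. If the
union fell short of `t`, a small set of positive mass `η` would stay admissible forever, forcing
`n * η ≤ 2 * ν (B n) ≤ 2 * t` for all `n`. -/
theorem exists_subset_measure_eq (h : ν.Nonatomic) {T : Set C} (hT : MeasurableSet T)
    {t : ℝ≥0∞} (ht : t ≤ ν T) : ∃ B ⊆ T, MeasurableSet B ∧ ν B = t := by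
  have ht_top : t ≠ ∞ := ne_top_of_le_ne_top (measure_ne_top ν T) ht
  choose E hET hE hEt hEmax using fun B : Set C =>
    exists_subset_measure_le_forall_le_two_mul ν (T \ B) (ne_top_of_le_ne_top ht_top tsub_le_self)
  let B : ℕ → Set C := fun n => Nat.rec ∅ (fun _ B => B ∪ E B) n
  have hB (n : ℕ) : B n ⊆ T ∧ MeasurableSet (B n) := by
    induction n with
    | zero => exact ⟨empty_subset T, .empty⟩
    | succ n ih => exact ⟨union_subset ih.1 ((hET _).trans sdiff_subset), ih.2.union (hE _)⟩
  have hνB_succ (n : ℕ) : ν (B (n + 1)) = ν (B n) + ν (E (B n)) :=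
    measure_union (disjoint_sdiff_right.mono_right (hET _)) (hE _)
  have hBt (n : ℕ) : ν (B n) ≤ t := by
    induction n with
    | zero => simp [B]
    | succ n ih => rw [hνB_succ]; exact add_le_of_le_tsub_left_of_le ih (hEt _)
  have hνB : ν (⋃ n, B n) = ⨆ n, ν (B n) :=
    (monotone_nat_of_le_succ fun n => subset_union_left).measure_iUnion
  have hB_meas : MeasurableSet (⋃ n, B n) := .iUnion fun n => (hB n).2
  refine ⟨⋃ n, B n, iUnion_subset fun n => (hB n).1, hB_meas,
    le_antisymm (hνB ▸ iSup_le hBt) ?_⟩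
  by_contra! hlt
  have hgap : 0 < ν (T \ ⋃ n, B n) := by
    rw [measure_sdiff (iUnion_subset fun n => (hB n).1) hB_meas.nullMeasurableSet (by finiteness)]
    exact tsub_pos_of_lt (hlt.trans_le ht)
  obtain ⟨E₀, hE₀T, hE₀, hE₀pos, hE₀t⟩ :=
    h.exists_pos_measure_lt (hT.diff hB_meas) hgap (tsub_pos_of_lt hlt)
  have hE₀le (n : ℕ) : ν E₀ ≤ 2 * ν (E (B n)) :=
    hEmax _ E₀ (hE₀T.trans (sdiff_subset_sdiff_right (subset_iUnion B n))) hE₀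
      (hE₀t.le.trans (tsub_le_tsub_left (hνB ▸ le_iSup (fun n => ν (B n)) n) t))
  have hgrow (n : ℕ) : n * ν E₀ ≤ 2 * ν (B n) := by
    induction n with
    | zero => simp
    | succ n ih =>
      rw [hνB_succ, mul_add, Nat.cast_succ, add_mul, one_mul]
      exact add_le_add ih (hE₀le n)
  obtain ⟨n, hn⟩ := ENNReal.exists_nat_mul_gt hE₀pos.ne' (b := 2 * t)
    (ENNReal.mul_ne_top ENNReal.ofNat_ne_top ht_top)
  exact ((hgrow n).trans (by gcongr; exact hBt n)).not_gt hn

theorem exists_fin_partition_measure_eq (h : ν.Nonatomic) :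
    ∀ {k : ℕ} {T : Set C} (t : Fin (k + 1) → ℝ≥0∞), MeasurableSet T → ∑ j, t j = ν T →
      ∃ B, IsMeasurablePartition B T ∧ ∀ j, ν (B j) = t j
  | 0, T, t, hT, ht => ⟨fun _ => T, ⟨fun _ => hT, fun i j hij => (hij (by omega)).elim,
      iUnion_const T⟩, fun j => by simpa [show j = 0 by omega] using ht.symm⟩
  | k + 1, T, t, hT, ht => by
    rw [Fin.sum_univ_succ] at ht
    obtain ⟨B₀, hB₀T, hB₀, hνB₀⟩ := h.exists_subset_measure_eq hT (ht ▸ le_self_add)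
    have hrest : ∑ j, Fin.tail t j = ν (T \ B₀) := by
      rw [measure_sdiff hB₀T hB₀.nullMeasurableSet (by finiteness), hνB₀, ← ht,
        ENNReal.add_sub_cancel_left (ne_top_of_le_ne_top (measure_ne_top ν T) (ht ▸ le_self_add))]
      rfl
    obtain ⟨B, hB, hνB⟩ := exists_fin_partition_measure_eq h (Fin.tail t) (hT.diff hB₀) hrest
    exact ⟨Fin.cons B₀ B, hB.cons hB₀ hB₀T, Fin.cases hνB₀ hνB⟩

theorem exists_partition_measure_eq {ι : Type*} [Fintype ι] [Nonempty ι] (h : ν.Nonatomic)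
    {T : Set C} (hT : MeasurableSet T) (t : ι → ℝ≥0∞) (ht : ∑ j, t j = ν T) :
    ∃ B, IsMeasurablePartition B T ∧ ∀ j, ν (B j) = t j := by
  obtain ⟨k, hk⟩ := Nat.exists_eq_succ_of_ne_zero (Fintype.card_ne_zero (α := ι))
  let e := Fintype.equivFinOfCardEq hk
  obtain ⟨B, hB, hνB⟩ := h.exists_fin_partition_measure_eq (t ∘ e.symm) hT
    (by rw [← ht]; exact e.symm.sum_comp t)
  exact ⟨B ∘ e, hB.comp_equiv e, fun j => by simp [hνB]⟩

theorem exists_partition_measureReal_eq {ι : Type*} [Fintype ι] (h : ν.Nonatomic) {T : Set C}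
    (hT : MeasurableSet T) {θ : ι → ℝ} (hθ : θ ∈ stdSimplex ℝ ι) :
    ∃ B, IsMeasurablePartition B T ∧ ∀ j, ν.real (B j) = θ j * ν.real T := by
  have := nonempty_of_mem_stdSimplex hθ
  obtain ⟨B, hB, hνB⟩ := h.exists_partition_measure_eq hT (fun j => ENNReal.ofReal (θ j) * ν T)
    (by rw [← Finset.sum_mul, ← ENNReal.ofReal_sum_of_nonneg fun j _ => hθ.1 j, hθ.2,
      ENNReal.ofReal_one, one_mul])
  refine ⟨B, hB, fun j => ?_⟩
  rw [measureReal_def, hνB, ENNReal.toReal_mul, ENNReal.toReal_ofReal (hθ.1 j), measureReal_def]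

end Measure.Nonatomic

variable {ν : Measure C}

theorem integrable_iSup {ι : Type*} [Fintype ι] {g : ι → C → ℝ} (hg : ∀ j, Integrable (g j) ν) :
    Integrable (fun x => ⨆ j, g j x) ν := by
  rcases isEmpty_or_nonempty ι with _ | _
  · simp
  refine (integrable_finsetSum Finset.univ fun j _ => (hg j).abs).mono'
    (AEMeasurable.iSup fun j => (hg j).aemeasurable).aestronglyMeasurable (ae_of_all _ fun x => ?_)
  have hle (j : ι) : |g j x| ≤ ∑ i, |g i x| :=
    Finset.single_le_sum (fun i _ => abs_nonneg (g i x)) (Finset.mem_univ j)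
  let j₀ := Classical.arbitrary ι
  refine abs_le.2 ⟨?_, ciSup_le fun j => (le_abs_self _).trans (hle j)⟩
  calc -∑ i, |g i x| ≤ g j₀ x := neg_le_of_abs_le (hle j₀)
    _ ≤ ⨆ j, g j x := le_ciSup (f := fun j => g j x) (Finite.bddAbove_range _) j₀

theorem Integrable.exists_simpleFunc_le_integral_le_add [IsFiniteMeasure ν] {f : C → ℝ}
    (hf_nonneg : ∀ x, 0 ≤ f x) (hf : Integrable f ν) {δ : ℝ} (hδ : 0 < δ) :
    ∃ φ : SimpleFunc C ℝ, (∀ x, 0 ≤ φ x) ∧ (∀ x, φ x ≤ f x) ∧ ∫ x, f x ∂ν ≤ ∫ x, φ x ∂ν + δ := by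
  rcases le_or_gt (∫ x, f x ∂ν) 0 with hf₀ | hf₀
  · refine ⟨0, fun _ => le_rfl, hf_nonneg, ?_⟩
    simp only [SimpleFunc.coe_zero, Pi.zero_apply, integral_zero, zero_add]
    linarith
  have hlt : ENNReal.ofReal (∫ x, f x ∂ν - δ) < ∫⁻ x, ENNReal.ofReal (f x) ∂ν := by
    rw [← ofReal_integral_eq_lintegral_ofReal hf (ae_of_all _ hf_nonneg)]
    exact (ENNReal.ofReal_lt_ofReal_iff hf₀).2 (by linarith)
  obtain ⟨g, hgf, -, hg⟩ :=
    exists_lt_lintegral_simpleFunc_of_lt_lintegral (f := fun x => (f x).toNNReal) hlt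
  refine ⟨g.map ((↑) : ℝ≥0 → ℝ), fun x => (g x).2,
    fun x => (Real.le_toNNReal_iff_coe_le (hf_nonneg x)).1 (hgf x), ?_⟩
  rw [lintegral_coe_eq_integral _ (g.map ((↑) : ℝ≥0 → ℝ)).integrable_of_isFiniteMeasure] at hg
  have := (ENNReal.ofReal_lt_ofReal_iff'.1 hg).1
  simp only [SimpleFunc.coe_map, Function.comp_apply]
  linarith

theorem integral_iSup_mul_le_add {ι : Type*} [Fintype ι] {f φ : ι → C → ℝ}
    (hf : ∀ j, Integrable (f j) ν) (hφ : ∀ j, Integrable (φ j) ν) (hφf : ∀ j x, φ j x ≤ f j x)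
    {β : ι → ℝ} (hβ : β ∈ stdSimplex ℝ ι) :
    ∫ x, ⨆ j, β j * f j x ∂ν ≤
      ∫ x, ⨆ j, β j * φ j x ∂ν + ∑ j, (∫ x, f j x ∂ν - ∫ x, φ j x ∂ν) := by
  have := nonempty_of_mem_stdSimplex hβ
  have hgap : Integrable (fun x => ∑ j, (f j x - φ j x)) ν :=
    integrable_finsetSum _ fun j _ => (hf j).sub (hφ j)
  have hGφ := integrable_iSup fun j => (hφ j).const_mul (β j)
  have hpt (x : C) : ⨆ j, β j * f j x ≤ (⨆ j, β j * φ j x) + ∑ j, (f j x - φ j x) :=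
    ciSup_le fun j => by
      have h₁ : β j * φ j x ≤ ⨆ i, β i * φ i x :=
        le_ciSup (f := fun i => β i * φ i x) (Finite.bddAbove_range _) j
      have h₂ : β j * (f j x - φ j x) ≤ f j x - φ j x :=
        mul_le_of_le_one_left (sub_nonneg.2 (hφf j x)) (mem_Icc_of_mem_stdSimplex hβ j).2
      have h₃ : f j x - φ j x ≤ ∑ i, (f i x - φ i x) :=
        Finset.single_le_sum (fun i _ => sub_nonneg.2 (hφf i x)) (Finset.mem_univ j)
      linarith [mul_sub (β j) (f j x) (φ j x)]
  calc ∫ x, ⨆ j, β j * f j x ∂ν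
      ≤ ∫ x, (⨆ j, β j * φ j x) + ∑ j, (f j x - φ j x) ∂ν :=
        integral_mono (integrable_iSup fun j => (hf j).const_mul (β j)) (hGφ.add hgap) hpt
    _ = _ := by
        rw [integral_add hGφ hgap,
          integral_finsetSum (f := fun j x => f j x - φ j x) _ fun j _ => (hf j).sub (hφ j)]
        simp_rw [integral_sub (hf _) (hφ _)]

namespace SimpleFunc

def pi {ι β : Type*} [Finite ι] (φ : ι → SimpleFunc C β) : SimpleFunc C (ι → β) where
  toFun x j := φ j x
  measurableSet_fiber' v := by
    have : (fun x j => φ j x) ⁻¹' {v} = ⋂ j, φ j ⁻¹' {v j} := by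
      ext x
      simp [funext_iff]
    rw [this]
    exact .iInter fun j => (φ j).measurableSet_fiber (v j)
  finite_range' := (Set.Finite.pi fun j => (φ j).finite_range).subset
    fun _ ⟨x, hx⟩ j _ => ⟨x, congrFun hx j⟩

theorem isMeasurablePartition_fiber {β : Type*} (Φ : SimpleFunc C β) :
    IsMeasurablePartition (fun v : Φ.range => Φ ⁻¹' {v.1}) univ where
  measurableSet v := Φ.measurableSet_fiber v.1
  pairwise_disjoint _ _ hvw := disjoint_left.2 fun _ hv hw => hvw (Subtype.ext (hv.symm.trans hw))
  iUnion_eq := eq_univ_of_forall fun x => mem_iUnion.2 ⟨⟨Φ x, Φ.mem_range_self x⟩, rfl⟩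

theorem integral_comp_eq_sum [IsFiniteMeasure ν] {E : Type*} [NormedAddCommGroup E]
    (Φ : SimpleFunc C E) {g : E → ℝ} (hg : g 0 = 0) :
    ∫ x, g (Φ x) ∂ν = ∑ v ∈ Φ.range, ν.real (Φ ⁻¹' {v}) * g v :=
  ((Φ.map g).integral_eq_integral (Φ.map g).integrable_of_isFiniteMeasure).symm.trans
    (map_integral Φ g Φ.integrable_of_isFiniteMeasure hg)

theorem integral_iSup_mul_pi [IsFiniteMeasure ν] {ι : Type*} [Fintype ι]
    (φ : ι → SimpleFunc C ℝ) (β : ι → ℝ) :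
    ∫ x, ⨆ j, β j * φ j x ∂ν =
      ∑ c : (pi φ).range, ⨆ j, β j * (c.1 j * ν.real (pi φ ⁻¹' {c.1})) := by
  refine (integral_comp_eq_sum (pi φ) (g := fun v => ⨆ j, β j * v j) (by simp)).trans ?_
  rw [← Finset.sum_coe_sort]
  refine Finset.sum_congr rfl fun c _ => ?_
  rw [Real.mul_iSup_of_nonneg measureReal_nonneg]
  congr 1 with j
  ring

end SimpleFunc

section Density

variable {μ : Measure C} {f : C → ℝ}

theorem absolutelyContinuous_of_measureReal_eq_setIntegral [IsFiniteMeasure μ]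
    (hdens : ∀ A, MeasurableSet A → μ.real A = ∫ x in A, f x ∂ν) : μ ≪ ν :=
  Measure.AbsolutelyContinuous.mk fun A hA hνA => by
    rw [← measureReal_eq_zero_iff, hdens A hA, Measure.restrict_eq_zero.2 hνA,
      integral_zero_measure]

theorem mul_measureReal_le_of_forall_le [IsFiniteMeasure ν] (hf : Integrable f ν)
    (hdens : ∀ A, MeasurableSet A → μ.real A = ∫ x in A, f x ∂ν) {A : Set C}
    (hA : MeasurableSet A) {a : ℝ} (ha : ∀ x ∈ A, a ≤ f x) : a * ν.real A ≤ μ.real A := by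
  rw [hdens A hA, mul_comm, ← smul_eq_mul, ← setIntegral_const]
  exact setIntegral_mono_on (integrableOn_const (measure_ne_top ν A)) hf.integrableOn hA ha

end Density

variable {ι : Type*} [Fintype ι] {μ : ι → Measure C} {f : ι → C → ℝ}

theorem iInf_measureReal_le_integral_iSup (hf : ∀ j, Integrable (f j) ν)
    (hdens : ∀ j A, MeasurableSet A → (μ j).real A = ∫ x in A, f j x ∂ν)
    {A : ι → Set C} (hA : IsMeasurablePartition A univ) {α : ι → ℝ} (hα : α ∈ stdSimplex ℝ ι) :
    ⨅ j, (μ j).real (A j) ≤ ∫ x, ⨆ j, α j * f j x ∂ν := by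
  have hG := integrable_iSup fun j => (hf j).const_mul (α j)
  calc ⨅ j, (μ j).real (A j) = ∑ j, α j * ⨅ i, (μ i).real (A i) := by
        rw [← Finset.sum_mul, hα.2, one_mul]
    _ ≤ ∑ j, α j * (μ j).real (A j) := by
        gcongr with j
        · exact hα.1 j
        · exact ciInf_le (Finite.bddBelow_range _) j
    _ = ∑ j, ∫ x in A j, α j * f j x ∂ν := by
        simp_rw [hdens _ _ (hA.measurableSet _), integral_const_mul]
    _ ≤ ∑ j, ∫ x in A j, ⨆ i, α i * f i x ∂ν :=
        Finset.sum_le_sum fun j _ => setIntegral_mono_on ((hf j).const_mul _).integrableOn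
          hG.integrableOn (hA.measurableSet j) fun x _ =>
            le_ciSup (f := fun i => α i * f i x) (Finite.bddAbove_range _) j
    _ = ∫ x, ⨆ j, α j * f j x ∂ν := by
        rw [← integral_iUnion_fintype hA.measurableSet hA.pairwise_disjoint
          fun j => hG.integrableOn, hA.iUnion_eq, Measure.restrict_univ]

variable [IsFiniteMeasure ν] [∀ j, IsFiniteMeasure (μ j)]

theorem exists_partition_mul_le_measureReal (hf : ∀ j, Integrable (f j) ν)
    (hdens : ∀ j A, MeasurableSet A → (μ j).real A = ∫ x in A, f j x ∂ν)
    (hna : ∀ j, (μ j).Nonatomic) {T : Set C} (hT : MeasurableSet T) {v : ι → ℝ}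
    (hv : 0 ≤ v) (hvf : ∀ j, ∀ x ∈ T, v j ≤ f j x) {θ : ι → ℝ} (hθ : θ ∈ stdSimplex ℝ ι) :
    ∃ B, IsMeasurablePartition B T ∧ ∀ j, θ j * (v j * ν.real T) ≤ v j * ν.real (B j) := by
  classical
  by_cases hv₀ : v = 0
  · have := nonempty_of_mem_stdSimplex hθ
    exact ⟨_, .ite (Classical.arbitrary ι) hT, fun j => by simp [hv₀]⟩
  obtain ⟨j₀, hj₀⟩ : ∃ j, 0 < v j := by
    by_contra! h
    exact hv₀ (le_antisymm h hv)
  have hνμ : ν.restrict T ≪ (μ j₀).restrict T := Measure.AbsolutelyContinuous.mk fun A hA h₀ => by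
    rw [Measure.restrict_apply hA] at h₀ ⊢
    have h := mul_measureReal_le_of_forall_le (hf j₀) (hdens j₀) (hA.inter hT)
      fun x hx => hvf j₀ x hx.2
    rw [(measureReal_eq_zero_iff (by finiteness)).2 h₀] at h
    exact (measureReal_eq_zero_iff (by finiteness)).1
      (le_antisymm (nonpos_of_mul_nonpos_right h hj₀) measureReal_nonneg)
  have hμν := (absolutelyContinuous_of_measureReal_eq_setIntegral (hdens j₀)).restrict T
  obtain ⟨B, hB, hνB⟩ := (((hna j₀).restrict hT).of_absolutelyContinuous hνμ hμν)
    |>.exists_partition_measureReal_eq hT hθ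
  refine ⟨B, hB, fun j => le_of_eq ?_⟩
  rw [← measureReal_restrict_apply_self T, ← inter_eq_self_of_subset_left (hB.subset j),
    ← measureReal_restrict_apply' hT, hνB j]
  ring

theorem exists_partition_forall_sub_le_measureReal [Nonempty ι]
    (hf_nonneg : ∀ j x, 0 ≤ f j x) (hf : ∀ j, Integrable (f j) ν)
    (hdens : ∀ j A, MeasurableSet A → (μ j).real A = ∫ x in A, f j x ∂ν)
    (hna : ∀ j, (μ j).Nonatomic) {τ : ℝ} (hτ : ∀ α ∈ stdSimplex ℝ ι, τ ≤ ∫ x, ⨆ j, α j * f j x ∂ν)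
    {ε : ℝ} (hε : 0 < ε) :
    ∃ A, IsMeasurablePartition A univ ∧ ∀ j, τ - ε ≤ (μ j).real (A j) := by
  choose φ hφ_nonneg hφf hφ using fun j => (hf j).exists_simpleFunc_le_integral_le_add
    (hf_nonneg j) (δ := ε / Fintype.card ι) (by positivity)
  set Φ := SimpleFunc.pi φ
  have hcell (c : Φ.range) (j : ι) : ∀ x ∈ Φ ⁻¹' {c.1}, c.1 j = φ j x := by
    intro x hx
    rw [← (hx : Φ x = c.1)]
    rfl
  have hc_nonneg (c : Φ.range) : 0 ≤ c.1 := by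
    obtain ⟨x, hx⟩ := SimpleFunc.mem_range.1 c.2
    exact fun j => hx ▸ hφ_nonneg j x
  set w : Φ.range → ι → ℝ := fun c j => c.1 j * ν.real (Φ ⁻¹' {c.1})
  have hgap : ∑ j, (∫ x, f j x ∂ν - ∫ x, φ j x ∂ν) ≤ ε := by
    calc _ ≤ ∑ _j : ι, ε / Fintype.card ι := Finset.sum_le_sum fun j _ => by linarith [hφ j]
      _ = ε := by
        rw [Finset.sum_const, Finset.card_univ, nsmul_eq_mul, mul_div_cancel₀ _ (by positivity)]
  have hw (β : ι → ℝ) (hβ : β ∈ stdSimplex ℝ ι) : τ - ε ≤ ∑ c, ⨆ j, β j * w c j := by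
    rw [← SimpleFunc.integral_iSup_mul_pi]
    linarith [hτ β hβ,
      integral_iSup_mul_le_add hf (fun j => (φ j).integrable_of_isFiniteMeasure) hφf hβ]
  obtain ⟨θ, hθ, hθw⟩ := exists_forall_le_sum_mul_of_forall_le_sum_iSup w hw
  choose B hB hBw using fun c : Φ.range => exists_partition_mul_le_measureReal hf hdens hna
    (Φ.measurableSet_fiber c.1) (hc_nonneg c) (fun j x hx => hcell c j x hx ▸ hφf j x) (hθ c)
  have hP := Φ.isMeasurablePartition_fiber
  refine ⟨fun j => ⋃ c, B c j, hP.iUnion_of_refinement hB, fun j => ?_⟩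
  calc τ - ε ≤ ∑ c, θ c j * w c j := hθw j
    _ ≤ ∑ c, c.1 j * ν.real (B c j) := Finset.sum_le_sum fun c _ => hBw c j
    _ ≤ ∑ c, (μ j).real (B c j) := Finset.sum_le_sum fun c _ =>
        mul_measureReal_le_of_forall_le (hf j) (hdens j) ((hB c).measurableSet j)
          fun x hx => hcell c j x ((hB c).subset j hx) ▸ hφf j x
    _ = (μ j).real (⋃ c, B c j) := (measureReal_iUnion_fintype
        (fun c c' hcc' => (hP.pairwise_disjoint hcc').mono ((hB c).subset j) ((hB c').subset j))
        fun c => (hB c).measurableSet j).symm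

end MeasureTheory

theorem maxmin_eq_inf_g_general
    {C : Type} [MeasurableSpace C] {m : ℕ}
    (ν : Measure C) [IsFiniteMeasure ν]
    (μ : Fin m → Measure C) [∀ j, IsFiniteMeasure (μ j)]
    (f : Fin m → C → ℝ)
    (hf_nonneg : ∀ j x, 0 ≤ f j x)
    (hf_int : ∀ j, Integrable (f j) ν)
    (hdens : ∀ j (A : Set C), MeasurableSet A → (μ j A).toReal = ∫ x in A, f j x ∂ν)
    (hna : ∀ j (A : Set C), MeasurableSet A → 0 < μ j A →
      ∃ B, MeasurableSet B ∧ B ⊆ A ∧ 0 < μ j B ∧ 0 < μ j (A \ B)) :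
    sSup {r : ℝ | ∃ A : Fin m → Set C, (∀ i, MeasurableSet (A i)) ∧
          (∀ i j, i ≠ j → Disjoint (A i) (A j)) ∧ (⋃ i, A i) = Set.univ ∧
          r = ⨅ j, (μ j (A j)).toReal} =
      sInf {r : ℝ | ∃ α : Fin m → ℝ, (∀ j, 0 ≤ α j) ∧ (∑ j, α j = 1) ∧
          r = ∫ x, (⨆ j, α j * f j x) ∂ν} := by
  set S := {r : ℝ | ∃ A : Fin m → Set C, (∀ i, MeasurableSet (A i)) ∧
    (∀ i j, i ≠ j → Disjoint (A i) (A j)) ∧ (⋃ i, A i) = Set.univ ∧ r = ⨅ j, (μ j (A j)).toReal}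
  set G := {r : ℝ | ∃ α : Fin m → ℝ, (∀ j, 0 ≤ α j) ∧ (∑ j, α j = 1) ∧
    r = ∫ x, (⨆ j, α j * f j x) ∂ν}
  cases m with
  | zero =>
    have hG : G = ∅ := eq_empty_of_forall_notMem fun _ ⟨_, _, hα, _⟩ => by simp at hα
    have hS : ∀ r ∈ S, r = 0 := fun _ ⟨_, _, _, _, hr⟩ => hr.trans (Real.iInf_of_isEmpty _)
    rw [hG, Real.sInf_empty]
    exact le_antisymm (Real.sSup_nonpos fun r hr => (hS r hr).le)
      (Real.sSup_nonneg fun r hr => (hS r hr).ge)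
  | succ n =>
    have hweak : ∀ r ∈ S, ∀ s ∈ G, r ≤ s := by
      rintro _ ⟨A, hA, hAd, hAu, rfl⟩ _ ⟨α, hα₀, hα₁, rfl⟩
      exact iInf_measureReal_le_integral_iSup hf_int hdens ⟨hA, hAd, hAu⟩ ⟨hα₀, hα₁⟩
    have hS : (⨅ j, (μ j (if j = 0 then univ else ∅)).toReal) ∈ S :=
      have h := IsMeasurablePartition.ite (0 : Fin (n + 1)) (MeasurableSet.univ (α := C))
      ⟨_, h.measurableSet, h.pairwise_disjoint, h.iUnion_eq, rfl⟩
    have hG : G.Nonempty :=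
      ⟨_, _, (single_mem_stdSimplex ℝ 0).1, (single_mem_stdSimplex ℝ 0).2, rfl⟩
    refine le_antisymm (csSup_le ⟨_, hS⟩ fun r hr => le_csInf hG (hweak r hr))
      (le_of_forall_pos_le_add fun ε hε => ?_)
    obtain ⟨A, hA, hAμ⟩ := exists_partition_forall_sub_le_measureReal hf_nonneg hf_int hdens
      hna (fun α hα => csInf_le ⟨_, hweak _ hS⟩ ⟨α, hα.1, hα.2, rfl⟩) hε
    have hAS : (⨅ j, (μ j (A j)).toReal) ∈ S :=
      ⟨A, hA.measurableSet, hA.pairwise_disjoint, hA.iUnion_eq, rfl⟩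
    have hAμ' : sInf G - ε ≤ ⨅ j, (μ j (A j)).toReal := le_ciInf hAμ
    linarith [le_csSup ⟨_, fun r hr => hweak r hr _ hG.some_mem⟩ hAS]

/-- If each `μ j` is nonatomic, the maxmin value equals the minimum
of `g` over the simplex:
`sup_A min_j μ j (A j) = inf_{α ∈ Δ} ∫ max_j (α j * f j x) dν`. -/
theorem maxmin_eq_inf_g
    {C : Type} [MeasurableSpace C] {m : ℕ}
    (ν : Measure C) [IsFiniteMeasure ν]
    (μ : Fin m → Measure C) [∀ j, IsFiniteMeasure (μ j)]
    (f : Fin m → C → ℝ)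
    (hf_meas : ∀ j, Measurable (f j))
    (hf_nonneg : ∀ j x, 0 ≤ f j x)
    (hf_int : ∀ j, Integrable (f j) ν)
    (hdens : ∀ j (A : Set C), MeasurableSet A → (μ j A).toReal = ∫ x in A, f j x ∂ν)
    (hna : ∀ j (A : Set C), MeasurableSet A → 0 < μ j A →
      ∃ B, MeasurableSet B ∧ B ⊆ A ∧ 0 < μ j B ∧ 0 < μ j (A \ B)) :
    sSup {r : ℝ | ∃ A : Fin m → Set C, (∀ i, MeasurableSet (A i)) ∧
          (∀ i j, i ≠ j → Disjoint (A i) (A j)) ∧ (⋃ i, A i) = Set.univ ∧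
          r = ⨅ j, (μ j (A j)).toReal} =
      sInf {r : ℝ | ∃ α : Fin m → ℝ, (∀ j, 0 ≤ α j) ∧ (∑ j, α j = 1) ∧
          r = ∫ x, (⨆ j, α j * f j x) ∂ν} :=
  maxmin_eq_inf_g_general ν μ f hf_nonneg hf_int hdens hna
end

section
/- Assume each μ_j is nonatomic and μ_j(C) > 0 for every j. Let (A_1, …, A_m) be any m-partition of C, set u_j := μ_j(A_j), and let h be an index with u_h = max_{j=1..m} u_j. Then the maxmin value v := sup over all m-partitions of min_j μ_j(A_j) satisfies v ≥ u_h / (1 + Σ_{j ≠ h} (u_h − u_j)/μ_j(C)). -/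
/-!
With `D = 1 + ∑ j, (u h - u j) / μ j C`, consider the fractional allocation in which every
agent `j` takes the share `(u h - u j) / (μ j C * D)` of each part `A i`, measured by `μ j`, while
the owner `i` of `A i` keeps a further `D⁻¹` of it: every agent then gets exactly `u h / D`.
Nonatomicity makes fractional allocations realisable up to any `ε`. By Sierpiński's theorem a
nonatomic measure takes every value between `0` and `μ A` on subsets of `A`, so the
last-diminisher procedure divides each part `A i` so that every agent `j` whose allotted fraction
is `β` gets at least `⌊β * q⌋` shares of value `μ j (A i) / q`.
-/

open MeasureTheory
open Set Function
open scoped ENNReal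

theorem Pairwise.disjoint_update_union {α ι : Type*} [DecidableEq ι] {P : ι → Set α}
    (hP : Pairwise (Disjoint on P)) {X : Set α} (hX : ∀ j, Disjoint (P j) X) (k : ι) :
    Pairwise (Disjoint on update P k (P k ∪ X)) := by
  intro i j hij
  simp only [onFun, update_apply]
  split_ifs with hi hj hj
  · exact absurd (hi.trans hj.symm) hij
  · exact (hP (hi ▸ hij)).union_left (hX j).symm
  · exact (hP (hj ▸ hij)).union_right (hX i)
  · exact hP hij

variable {α : Type*} [MeasurableSpace α]

def IsNonatomic (μ : Measure α) : Prop :=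
  ∀ A, MeasurableSet A → 0 < μ A → ∃ B, MeasurableSet B ∧ B ⊆ A ∧ 0 < μ B ∧ 0 < μ (A \ B)

theorem exists_half_maximal_subset_measure_le (μ : Measure α) [IsFiniteMeasure μ]
    (S : Set α) (r : ℝ≥0∞) :
    ∃ D ⊆ S, MeasurableSet D ∧ μ D ≤ r ∧
      ∀ E ⊆ S, MeasurableSet E → μ E ≤ r → μ E ≤ 2 * μ D := by
  set σ := ⨆ E : {E // E ⊆ S ∧ MeasurableSet E ∧ μ E ≤ r}, μ E.1
  have hσ : ∀ E ⊆ S, MeasurableSet E → μ E ≤ r → μ E ≤ σ := fun E hES hE hEr =>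
    le_iSup (fun E : {E // E ⊆ S ∧ MeasurableSet E ∧ μ E ≤ r} => μ E.1) ⟨E, hES, hE, hEr⟩
  rcases eq_or_ne σ 0 with hσ0 | hσ0
  · exact ⟨∅, empty_subset S, .empty, by simp, fun E hES hE hEr => by
      simpa [hσ0] using hσ E hES hE hEr⟩
  have hσ_top : σ ≠ ∞ :=
    ne_top_of_le_ne_top (measure_ne_top μ S) (iSup_le fun E => measure_mono E.2.1)
  obtain ⟨⟨D, hDS, hD, hDr⟩, hσD⟩ := lt_iSup_iff.mp (ENNReal.half_lt_self hσ0 hσ_top)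
  refine ⟨D, hDS, hD, hDr, fun E hES hE hEr => (hσ E hES hE hEr).trans ?_⟩
  rw [ENNReal.div_lt_iff (.inl two_ne_zero) (.inl ENNReal.ofNat_ne_top)] at hσD
  rw [mul_comm]
  exact hσD.le

namespace IsNonatomic

variable {μ : Measure α}

theorem exists_subset_two_mul_le (hμ : IsNonatomic μ) {A : Set α} (hA : MeasurableSet A)
    (hA₀ : 0 < μ A) : ∃ B ⊆ A, MeasurableSet B ∧ 0 < μ B ∧ 2 * μ B ≤ μ A := by
  obtain ⟨B, hB, hBA, hB₀, hAB₀⟩ := hμ A hA hA₀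
  have hsum : μ B + μ (A \ B) = μ A := by
    rw [measure_add_sdiff hB.nullMeasurableSet, union_eq_self_of_subset_left hBA]
  rcases le_total (μ B) (μ (A \ B)) with hle | hle
  · exact ⟨B, hBA, hB, hB₀, by rw [two_mul, ← hsum]; gcongr⟩
  · exact ⟨A \ B, sdiff_subset, hA.diff hB, hAB₀, by rw [two_mul, ← hsum]; gcongr⟩

theorem exists_subset_pos_lt (hμ : IsNonatomic μ) {A : Set α} (hA : MeasurableSet A)
    (hA₀ : 0 < μ A) (hA_top : μ A ≠ ∞) {ε : ℝ≥0∞} (hε : 0 < ε) :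
    ∃ B ⊆ A, MeasurableSet B ∧ 0 < μ B ∧ μ B < ε := by
  have halve : ∀ n : ℕ, ∃ B ⊆ A, MeasurableSet B ∧ 0 < μ B ∧ 2 ^ n * μ B ≤ μ A := by
    intro n
    induction n with
    | zero => exact ⟨A, subset_rfl, hA, hA₀, by simp⟩
    | succ n ih =>
      obtain ⟨B, hBA, hB, hB₀, hBn⟩ := ih
      obtain ⟨B', hB'B, hB', hB'₀, hB'2⟩ := hμ.exists_subset_two_mul_le hB hB₀
      refine ⟨B', hB'B.trans hBA, hB', hB'₀, ?_⟩
      calc 2 ^ (n + 1) * μ B' = 2 ^ n * (2 * μ B') := by ring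
        _ ≤ 2 ^ n * μ B := by gcongr
        _ ≤ μ A := hBn
  obtain ⟨n, hn⟩ := ENNReal.exists_nat_mul_gt hε.ne' hA_top
  obtain ⟨B, hBA, hB, hB₀, hBn⟩ := halve n
  refine ⟨B, hBA, hB, hB₀, lt_of_mul_lt_mul_left' (a := (2 : ℝ≥0∞) ^ n) ?_⟩
  calc 2 ^ n * μ B ≤ μ A := hBn
    _ < n * ε := hn
    _ ≤ 2 ^ n * ε := by gcongr; exact_mod_cast (Nat.lt_two_pow_self).le

theorem exists_subset_measure_eq [IsFiniteMeasure μ] (hμ : IsNonatomic μ) {A : Set α}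
    (hA : MeasurableSet A) {c : ℝ≥0∞} (hc : c ≤ μ A) :
    ∃ B ⊆ A, MeasurableSet B ∧ μ B = c := by
  choose D hDA hD hDc hDmax using fun B : Set α =>
    exists_half_maximal_subset_measure_le μ (A \ B) (c - μ B)
  let f : ℕ → Set α := fun k => Nat.rec ∅ (fun _ B => B ∪ D B) k
  have hf : ∀ k, f k ⊆ A ∧ MeasurableSet (f k) ∧ μ (f k) ≤ c := by
    intro k
    induction k with
    | zero => exact ⟨empty_subset A, .empty, by simp [f]⟩
    | succ k ih =>
      obtain ⟨hfA, hfm, hfc⟩ := ih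
      refine ⟨union_subset hfA ((hDA _).trans sdiff_subset), hfm.union (hD _), ?_⟩
      calc μ (f (k + 1)) ≤ μ (f k) + μ (D (f k)) := measure_union_le _ _
        _ ≤ μ (f k) + (c - μ (f k)) := by gcongr; exact hDc _
        _ = c := add_tsub_cancel_of_le hfc
  have hf_mono : Monotone f := monotone_nat_of_le_succ fun k => subset_union_left
  have hf_add : ∀ k, μ (f (k + 1)) = μ (f k) + μ (D (f k)) := fun k =>
    measure_union (disjoint_left.2 fun x hx hx' => (hDA _ hx').2 hx) (hD _)
  set B := ⋃ k, f k
  have hBA : B ⊆ A := iUnion_subset fun k => (hf k).1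
  have hB : MeasurableSet B := .iUnion fun k => (hf k).2.1
  have hBc : μ B ≤ c := by
    rw [hf_mono.measure_iUnion]
    exact iSup_le fun k => (hf k).2.2
  refine ⟨B, hBA, hB, hBc.antisymm (not_lt.1 fun hBc' => ?_)⟩
  -- A positive piece of `A \ B` that still fits below `c` was available at every greedy step,
  -- so every step added at least half its measure: infinitely often, which is impossible.
  have hAB : 0 < μ (A \ B) :=
    (tsub_pos_of_lt hBc').trans_le ((tsub_le_tsub_right hc _).trans le_measure_sdiff)
  obtain ⟨E, hEA, hE, hE₀, hEc⟩ := hμ.exists_subset_pos_lt (hA.diff hB) hAB (measure_ne_top _ _)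
    (tsub_pos_of_lt hBc')
  have hED : ∀ k, μ E ≤ 2 * μ (D (f k)) := fun k =>
    hDmax (f k) E (hEA.trans (sdiff_subset_sdiff_right (subset_iUnion f k))) hE
      (hEc.le.trans (tsub_le_tsub_left (measure_mono (subset_iUnion f k)) c))
  have hgrow : ∀ k : ℕ, k * μ E ≤ 2 * μ (f k) := by
    intro k
    induction k with
    | zero => simp
    | succ k ih =>
      rw [hf_add, mul_add, Nat.cast_succ, add_one_mul]
      exact add_le_add ih (hED k)
  obtain ⟨k, hk⟩ := ENNReal.exists_nat_mul_gt hE₀.ne'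
    (ENNReal.mul_ne_top (by norm_num) (ne_top_of_le_ne_top (measure_ne_top μ A) hc) : 2 * c ≠ ∞)
  exact (hk.trans_le ((hgrow k).trans (by gcongr; exact (hf k).2.2))).false

end IsNonatomic

section Division

variable {ι : Type*} {μ : ι → Measure α} [∀ i, IsFiniteMeasure (μ i)]

theorem exists_last_diminisher (hμ : ∀ i, IsNonatomic (μ i)) {A : Set α} (hA : MeasurableSet A)
    (t : ι → ℝ≥0∞) {J : Finset ι} (hJ : J.Nonempty) (ht : ∀ j ∈ J, t j ≤ μ j A) :
    ∃ k ∈ J, ∃ X ⊆ A, MeasurableSet X ∧ μ k X = t k ∧ ∀ j ∈ J, μ j X ≤ t j := by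
  induction hJ using Finset.Nonempty.cons_induction with
  | singleton k =>
    obtain ⟨X, hXA, hX, hXk⟩ :=
      (hμ k).exists_subset_measure_eq hA (ht k (Finset.mem_singleton_self k))
    exact ⟨k, Finset.mem_singleton_self k, X, hXA, hX, hXk, by simp [hXk]⟩
  | cons i J hiJ hJ ih =>
    obtain ⟨k, hkJ, X, hXA, hX, hXk, hXJ⟩ := ih fun j hj => ht j (Finset.mem_cons_of_mem hj)
    by_cases hi : μ i X ≤ t i
    · exact ⟨k, Finset.mem_cons_of_mem hkJ, X, hXA, hX, hXk,
        (Finset.forall_mem_cons _ _).2 ⟨hi, hXJ⟩⟩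
    obtain ⟨Y, hYX, hY, hYi⟩ := (hμ i).exists_subset_measure_eq hX (not_le.1 hi).le
    exact ⟨i, Finset.mem_cons_self i J, Y, hYX.trans hXA, hY, hYi, (Finset.forall_mem_cons _ _).2
      ⟨hYi.le, fun j hj => (measure_mono hYX).trans (hXJ j hj)⟩⟩

/-- Each round of the last-diminisher procedure serves one share and costs every agent still
waiting at most one of its own shares. -/
theorem exists_disjoint_subsets_mul_le_measure [Fintype ι] [DecidableEq ι]
    (hμ : ∀ i, IsNonatomic (μ i)) (p : ι → ℕ) (t : ι → ℝ≥0∞) {A : Set α} (hA : MeasurableSet A)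
    (ht : ∀ j, p j ≠ 0 → (∑ i, p i) * t j ≤ μ j A) :
    ∃ P : ι → Set α, (∀ j, P j ⊆ A) ∧ (∀ j, MeasurableSet (P j)) ∧ Pairwise (Disjoint on P) ∧
      ∀ j, p j * t j ≤ μ j (P j) := by
  induction hn : ∑ i, p i generalizing p A with
  | zero =>
    refine ⟨fun _ => ∅, fun _ => empty_subset A, fun _ => .empty,
      fun _ _ _ => disjoint_empty _, fun j => ?_⟩
    simp [Finset.sum_eq_zero_iff.1 hn j (Finset.mem_univ j)]
  | succ n ih =>
    rw [hn] at ht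
    have htA : ∀ j, p j ≠ 0 → t j ≤ μ j A := fun j hj =>
      (le_mul_of_one_le_left' (Nat.one_le_cast.2 n.succ_pos)).trans (ht j hj)
    set J := Finset.univ.filter (p · ≠ 0)
    have hJ : J.Nonempty := by
      by_contra hJ
      simp only [J, Finset.not_nonempty_iff_eq_empty, Finset.filter_eq_empty_iff, Finset.mem_univ,
        true_implies, not_not] at hJ
      simp [hJ] at hn
    obtain ⟨k, hkJ, X, hXA, hX, hXk, hXJ⟩ := exists_last_diminisher hμ hA t hJ fun j hj =>
      htA j (by simpa [J] using hj)
    have hpk : p k ≠ 0 := by simpa [J] using hkJ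
    obtain ⟨p', hp'k, hp'⟩ : ∃ p' : ι → ℕ, p' k + 1 = p k ∧ ∀ j ≠ k, p' j = p j :=
      ⟨update p k (p k - 1), by simp only [update_self]; omega, fun j hj => update_of_ne hj _ _⟩
    have hp'p : ∀ j, p' j ≠ 0 → p j ≠ 0 := fun j hj => by
      rcases eq_or_ne j k with rfl | hjk
      · exact hpk
      · rwa [← hp' j hjk]
    have hsum : ∑ i, p' i = n := by
      have herase : ∑ j ∈ Finset.univ.erase k, p' j = ∑ j ∈ Finset.univ.erase k, p j :=
        Finset.sum_congr rfl fun j hj => hp' j (Finset.ne_of_mem_erase hj)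
      rw [← Finset.add_sum_erase _ _ (Finset.mem_univ k)] at hn ⊢
      omega
    have ht' : ∀ j, p' j ≠ 0 → (∑ i, p' i) * t j ≤ μ j (A \ X) := by
      intro j hj
      have hjJ : j ∈ J := by simpa [J] using hp'p j hj
      have htj : t j ≠ ∞ := ne_top_of_le_ne_top (measure_ne_top _ A) (htA j (hp'p j hj))
      rw [hsum]
      calc n * t j ≤ μ j A - t j := ENNReal.le_sub_of_add_le_right htj (by
              simpa [add_one_mul] using ht j (hp'p j hj))
        _ ≤ μ j A - μ j X := tsub_le_tsub_left (hXJ j hjJ) _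
        _ ≤ μ j (A \ X) := le_measure_sdiff
    obtain ⟨P, hPA, hP, hPd, hPp⟩ := ih p' (hA.diff hX) ht' hsum
    have hPX : ∀ j, Disjoint (P j) X := fun j => disjoint_sdiff_left.mono_left (hPA j)
    refine ⟨update P k (P k ∪ X), fun j => ?_, fun j => ?_, hPd.disjoint_update_union hPX k,
      fun j => ?_⟩ <;> rw [update_apply] <;> split_ifs with hj
    · exact union_subset ((hPA k).trans sdiff_subset) hXA
    · exact (hPA j).trans sdiff_subset
    · exact (hP k).union hX
    · exact hP j
    · subst hj
      calc p j * t j = (p' j + 1) * t j := by rw [← hp'k]; push_cast; rfl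
        _ = p' j * t j + μ j X := by rw [add_one_mul, hXk]
        _ ≤ μ j (P j) + μ j X := by gcongr; exact hPp j
        _ = μ j (P j ∪ X) := (measure_union (hPX j) hX).symm
    · exact hp' j hj ▸ hPp j

end Division

theorem exists_partition_superset {ι : Type*} [Countable ι] [Nonempty ι] {P : ι → Set α}
    (hP : ∀ i, MeasurableSet (P i)) (hPd : Pairwise (Disjoint on P)) :
    ∃ Q : ι → Set α, (∀ i, MeasurableSet (Q i)) ∧ Pairwise (Disjoint on Q) ∧
      ⋃ i, Q i = univ ∧ ∀ i, P i ⊆ Q i := by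
  classical
  let i₀ := Classical.arbitrary ι
  refine ⟨update P i₀ (P i₀ ∪ (⋃ i, P i)ᶜ), fun i => ?_,
    hPd.disjoint_update_union (fun j => disjoint_compl_right.mono_right
      (compl_subset_compl.2 (subset_iUnion P j))) i₀, ?_, fun i => ?_⟩
  · rw [update_apply]
    split_ifs
    exacts [(hP i₀).union (MeasurableSet.iUnion hP).compl, hP i]
  · refine eq_univ_of_forall fun x => ?_
    by_cases hx : x ∈ ⋃ i, P i
    · obtain ⟨i, hi⟩ := mem_iUnion.1 hx
      refine mem_iUnion.2 ⟨i, ?_⟩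
      rw [update_apply]
      split_ifs with h
      exacts [Or.inl (h ▸ hi), hi]
    · exact mem_iUnion.2 ⟨i₀, by rw [update_self]; exact Or.inr hx⟩
  · rw [update_apply]
    split_ifs with h
    exacts [h ▸ subset_union_left, subset_rfl]

section Rounding

variable {ι : Type*} [Fintype ι] [DecidableEq ι] [Nonempty ι] {μ : ι → Measure α}
  [∀ i, IsFiniteMeasure (μ i)] {A : ι → Set α} {β : ι → ι → ℝ}

theorem exists_partition_ge_of_fractional (hμ : ∀ i, IsNonatomic (μ i))
    (hA : ∀ i, MeasurableSet (A i)) (hAd : Pairwise (Disjoint on A)) (hβ₀ : ∀ i j, 0 ≤ β i j)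
    (hβ₁ : ∀ i, ∑ j, β i j = 1) {q : ℕ} (hq : q ≠ 0) :
    ∃ Q : ι → Set α, (∀ j, MeasurableSet (Q j)) ∧ Pairwise (Disjoint on Q) ∧ ⋃ j, Q j = univ ∧
      ∀ j, ∑ i, (β i j - (q : ℝ)⁻¹) * (μ j (A i)).toReal ≤ (μ j (Q j)).toReal := by
  have hq₀ : (0 : ℝ) < q := by positivity
  have hp : ∀ i, ∑ j, ⌊β i j * q⌋₊ ≤ q := fun i => by
    have : ∑ j, (⌊β i j * q⌋₊ : ℝ) ≤ ∑ j, β i j * q :=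
      Finset.sum_le_sum fun j _ => Nat.floor_le (mul_nonneg (hβ₀ i j) q.cast_nonneg)
    rw [← Finset.sum_mul, hβ₁, one_mul] at this
    exact_mod_cast this
  choose P hPA hP hPd hPμ using fun i =>
    exists_disjoint_subsets_mul_le_measure hμ (fun j => ⌊β i j * q⌋₊) (fun j => μ j (A i) / q)
      (hA i)      fun j _ => calc
        ((∑ j, ⌊β i j * q⌋₊ : ℕ) : ℝ≥0∞) * (μ j (A i) / q) ≤ q * (μ j (A i) / q) := by
          gcongr; exact_mod_cast hp i
        _ = μ j (A i) := ENNReal.mul_div_cancel (by simpa) (by simp)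
  have hU : Pairwise (Disjoint on fun j => ⋃ i, P i j) := by
    intro j j' hjj'
    simp only [onFun, disjoint_iUnion_left, disjoint_iUnion_right]
    intro i' i
    rcases eq_or_ne i i' with rfl | hii'
    · exact hPd i hjj'
    · exact (hAd hii').mono (hPA i j) (hPA i' j')
  obtain ⟨Q, hQ, hQd, hQc, hUQ⟩ :=
    exists_partition_superset (fun j => .iUnion fun i => hP i j) hU
  refine ⟨Q, hQ, hQd, hQc, fun j => ?_⟩
  calc ∑ i, (β i j - (q : ℝ)⁻¹) * (μ j (A i)).toReal ≤ ∑ i, (μ j (P i j)).toReal :=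
        Finset.sum_le_sum fun i _ => ?_
    _ = (μ j (⋃ i, P i j)).toReal := by
        rw [measure_iUnion (fun i i' hii' => (hAd hii').mono (hPA i j) (hPA i' j)) (hP · j),
          tsum_fintype, ENNReal.toReal_sum fun i _ => measure_ne_top _ _]
    _ ≤ (μ j (Q j)).toReal := ENNReal.toReal_mono (measure_ne_top _ _) (measure_mono (hUQ j))
  have hPij := ENNReal.toReal_mono (measure_ne_top _ _) (hPμ i j)
  rw [ENNReal.toReal_mul, ENNReal.toReal_div, ENNReal.toReal_natCast,
    ENNReal.toReal_natCast] at hPij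
  have hfloor : β i j - (q : ℝ)⁻¹ ≤ ⌊β i j * q⌋₊ / q := by
    rw [le_div_iff₀ hq₀, sub_mul, inv_mul_cancel₀ hq₀.ne']
    exact (Nat.sub_one_lt_floor _).le
  calc (β i j - (q : ℝ)⁻¹) * (μ j (A i)).toReal
      ≤ ⌊β i j * q⌋₊ / q * (μ j (A i)).toReal := by gcongr
    _ = ⌊β i j * q⌋₊ * ((μ j (A i)).toReal / q) := by ring
    _ ≤ (μ j (P i j)).toReal := hPij

theorem exists_partition_ge_sub_of_fractional (hμ : ∀ i, IsNonatomic (μ i))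
    (hA : ∀ i, MeasurableSet (A i)) (hAd : Pairwise (Disjoint on A)) (hβ₀ : ∀ i j, 0 ≤ β i j)
    (hβ₁ : ∀ i, ∑ j, β i j = 1) {ε : ℝ} (hε : 0 < ε) :
    ∃ Q : ι → Set α, (∀ j, MeasurableSet (Q j)) ∧ Pairwise (Disjoint on Q) ∧ ⋃ j, Q j = univ ∧
      ∀ j, ∑ i, β i j * (μ j (A i)).toReal - ε ≤ (μ j (Q j)).toReal := by
  obtain ⟨q, hq⟩ := exists_nat_gt ((∑ j, ∑ i, (μ j (A i)).toReal) / ε)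
  have hq₀ : (0 : ℝ) < q := lt_of_le_of_lt (by positivity) hq
  obtain ⟨Q, hQ, hQd, hQc, hQμ⟩ :=
    exists_partition_ge_of_fractional hμ hA hAd hβ₀ hβ₁ (q := q) (by exact_mod_cast hq₀.ne')
  refine ⟨Q, hQ, hQd, hQc, fun j => le_trans ?_ (hQμ j)⟩
  have herr : (q : ℝ)⁻¹ * ∑ i, (μ j (A i)).toReal ≤ ε := by
    rw [inv_mul_le_iff₀ hq₀]
    calc ∑ i, (μ j (A i)).toReal ≤ ∑ j, ∑ i, (μ j (A i)).toReal :=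
          Finset.single_le_sum (f := fun j => ∑ i, (μ j (A i)).toReal)
            (fun j _ => by positivity) (Finset.mem_univ j)
      _ ≤ q * ε := by rw [div_lt_iff₀ hε] at hq; exact hq.le
  simp only [sub_mul, Finset.sum_sub_distrib, ← Finset.mul_sum]
  linarith

end Rounding

/-- `a i j` is agent `j`'s value of part `i`, and `β i j` the fraction of part `i`, measured by
that value, allotted to agent `j`. -/
theorem exists_fractional_allocation {ι : Type*} [Fintype ι] [DecidableEq ι] (a : ι → ι → ℝ)
    (c : ι → ℝ) (hc : ∀ j, ∑ i, a i j = c j) (hc₀ : ∀ j, 0 < c j) (h : ι)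
    (hmax : ∀ j, a j j ≤ a h h) :
    ∃ β : ι → ι → ℝ, (∀ i j, 0 ≤ β i j) ∧ (∀ i, ∑ j, β i j = 1) ∧
      ∀ j, ∑ i, β i j * a i j = a h h / (1 + ∑ j, (a h h - a j j) / c j) := by
  set D := 1 + ∑ j, (a h h - a j j) / c j
  have hs₀ : ∀ j, 0 ≤ (a h h - a j j) / c j := fun j =>
    div_nonneg (sub_nonneg.2 (hmax j)) (hc₀ j).le
  have hD : 0 < D := by linarith [Finset.sum_nonneg fun j (_ : j ∈ Finset.univ) => hs₀ j]
  refine ⟨fun i j => (a h h - a j j) / c j / D + if i = j then D⁻¹ else 0, fun i j => ?_,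
    fun i => ?_, fun j => ?_⟩
  · have := hs₀ j
    dsimp only
    split_ifs <;> positivity
  · rw [Finset.sum_add_distrib, ← Finset.sum_div, Finset.sum_ite_eq, if_pos (Finset.mem_univ i)]
    field_simp
    ring
  · simp only [add_mul, Finset.sum_add_distrib, ite_mul, zero_mul, Finset.sum_ite_eq',
      Finset.mem_univ, if_true, ← Finset.mul_sum, hc]
    field_simp [(hc₀ j).ne']
    ring

/-- Lower bound for the maxmin value. For any m-partition `A` with
values `u j = μ j (A j)` and `h` an index of maximal value,
`v ≥ u h / (1 + ∑_{j ≠ h} (u h - u j) / μ j (C))`. -/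
theorem maxmin_lower_bound
    {C : Type} [MeasurableSpace C] {m : ℕ}
    (μ : Fin m → Measure C) [∀ j, IsFiniteMeasure (μ j)]
    (hna : ∀ j (A : Set C), MeasurableSet A → 0 < μ j A →
      ∃ B, MeasurableSet B ∧ B ⊆ A ∧ 0 < μ j B ∧ 0 < μ j (A \ B))
    (hpos : ∀ j, 0 < (μ j Set.univ).toReal)
    (A : Fin m → Set C)
    (hA_meas : ∀ i, MeasurableSet (A i))
    (hA_disj : ∀ i j, i ≠ j → Disjoint (A i) (A j))
    (hA_cover : (⋃ i, A i) = Set.univ)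
    (h : Fin m)
    (hmax : ∀ j, (μ j (A j)).toReal ≤ (μ h (A h)).toReal) :
    (μ h (A h)).toReal /
        (1 + ∑ j ∈ Finset.univ.erase h,
          ((μ h (A h)).toReal - (μ j (A j)).toReal) / (μ j Set.univ).toReal) ≤
      sSup {r : ℝ | ∃ A' : Fin m → Set C, (∀ i, MeasurableSet (A' i)) ∧
          (∀ i j, i ≠ j → Disjoint (A' i) (A' j)) ∧ (⋃ i, A' i) = Set.univ ∧
          r = ⨅ j, (μ j (A' j)).toReal} := by
  have : Nonempty (Fin m) := ⟨h⟩
  set S := {r : ℝ | ∃ A' : Fin m → Set C, (∀ i, MeasurableSet (A' i)) ∧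
      (∀ i j, i ≠ j → Disjoint (A' i) (A' j)) ∧ (⋃ i, A' i) = Set.univ ∧
      r = ⨅ j, (μ j (A' j)).toReal}
  have hcol : ∀ j, ∑ i, (μ j (A i)).toReal = (μ j univ).toReal := fun j => by
    rw [← hA_cover, measure_iUnion hA_disj hA_meas, tsum_fintype,
      ENNReal.toReal_sum fun i _ => measure_ne_top _ _]
  obtain ⟨β, hβ₀, hβ₁, hβ⟩ :=
    exists_fractional_allocation (fun i j => (μ j (A i)).toReal) _ hcol hpos h hmax
  rw [Finset.sum_erase _ (by simp), ← hβ h]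
  have hbdd : BddAbove S := by
    refine ⟨(μ h univ).toReal, ?_⟩
    rintro _ ⟨A', -, -, -, rfl⟩
    exact (ciInf_le ⟨0, by rintro _ ⟨j, rfl⟩; positivity⟩ h).trans
      (ENNReal.toReal_mono (measure_ne_top _ _) (measure_mono (subset_univ _)))
  refine le_of_forall_pos_le_add fun ε hε => ?_
  obtain ⟨Q, hQ, hQd, hQc, hQμ⟩ :=
    exists_partition_ge_sub_of_fractional hna hA_meas hA_disj hβ₀ hβ₁ hε
  have hQmin : ∑ i, β i h * (μ h (A i)).toReal - ε ≤ ⨅ j, (μ j (Q j)).toReal :=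
    le_ciInf fun j => by rw [hβ h, ← hβ j]; exact hQμ j
  linarith [le_csSup hbdd ⟨Q, hQ, fun i j hij => hQd hij, hQc, rfl⟩]
end

section
/- Let α, β ∈ Δ_{m−1}, let (B_1, …, B_m) be a maxsum partition for β, and set u_j := μ_j(B_j). Then g(α) − g(β) ≥ Σ_{j=1}^m u_j (α_j − β_j), where g(γ) := ∫_C max_{j=1..m} γ_j f_j(x) dν(x); that is, the partition value vector u is a subgradient of g at β. -/
open MeasureTheory Filter Topology

lemma integrable_sup'_aux {C : Type} [MeasurableSpace C] (ν : Measure C)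
    {ι : Type} (s : Finset ι) (hs : s.Nonempty) (g : ι → C → ℝ)
    (hg : ∀ j, Integrable (g j) ν) :
    Integrable (fun x => s.sup' hs (fun j => g j x)) ν := by
  induction hs using Finset.Nonempty.cons_induction with
  | singleton a => simpa using hg a
  | cons a s ha hs ih =>
    simp only [Finset.sup'_cons hs]
    exact (hg a).sup ih

/-- The partition value vector of a maxsum partition for `β` is a
subgradient of `g` at `β`: `g α - g β ≥ ∑ j, u j * (α j - β j)`. -/
theorem pvv_is_subgradient
    {C : Type} [MeasurableSpace C] {m : ℕ}
    (ν : Measure C) [IsFiniteMeasure ν]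
    (μ : Fin m → Measure C) [∀ j, IsFiniteMeasure (μ j)]
    (f : Fin m → C → ℝ)
    (hf_nonneg : ∀ j x, 0 ≤ f j x)
    (hf_int : ∀ j, Integrable (f j) ν)
    (hdens : ∀ j (A : Set C), MeasurableSet A → (μ j A).toReal = ∫ x in A, f j x ∂ν)
    (α β : Fin m → ℝ)
    (hα_nonneg : ∀ j, 0 ≤ α j) (hα_sum : ∑ j, α j = 1)
    (hβ_nonneg : ∀ j, 0 ≤ β j) (hβ_sum : ∑ j, β j = 1)
    (B : Fin m → Set C)
    (hB_meas : ∀ i, MeasurableSet (B i))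
    (hB_disj : ∀ i j, i ≠ j → Disjoint (B i) (B j))
    (hB_cover : (⋃ i, B i) = Set.univ)
    (hmaxsum : ∀ k, ∀ᵐ x ∂ν, x ∈ B k → ∀ h, β h * f h x ≤ β k * f k x) :
    ∑ j, (μ j (B j)).toReal * (α j - β j) ≤
      (∫ x, (⨆ j, α j * f j x) ∂ν) - ∫ x, (⨆ j, β j * f j x) ∂ν := by
  have hm : 0 < m := by
    by_contra h
    push_neg at h
    interval_cases m
    simp at hα_sum
  haveI : NeZero m := ⟨hm.ne'⟩
  have hne : (Finset.univ : Finset (Fin m)).Nonempty := Finset.univ_nonempty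
  -- sup rewrites
  have hsup : ∀ (γ : Fin m → ℝ) x,
      (⨆ j, γ j * f j x) = Finset.univ.sup' hne (fun j => γ j * f j x) := by
    intro γ x
    rw [Finset.sup'_univ_eq_ciSup]
  have hint : ∀ (γ : Fin m → ℝ), Integrable (fun x => ⨆ j, γ j * f j x) ν := by
    intro γ
    have := integrable_sup'_aux ν Finset.univ hne (fun j x => γ j * f j x)
      (fun j => (hf_int j).const_mul (γ j))
    exact this.congr (Filter.Eventually.of_forall fun x => (hsup γ x).symm)
  -- decompose integral over partition
  have hdecomp : ∀ (γ : Fin m → ℝ),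
      ∫ x, (⨆ j, γ j * f j x) ∂ν = ∑ k, ∫ x in B k, (⨆ j, γ j * f j x) ∂ν := by
    intro γ
    rw [← setIntegral_univ, ← hB_cover,
      integral_iUnion hB_meas (fun i j hij => hB_disj i j hij)
        ((hint γ).integrableOn), tsum_fintype]
  -- value of μ j (B j)
  have hu : ∀ j, (μ j (B j)).toReal = ∫ x in B j, f j x ∂ν := fun j =>
    hdens j (B j) (hB_meas j)
  -- g β = ∑ k ∫_{B k} β k f k
  have hβ_eq : ∫ x, (⨆ j, β j * f j x) ∂ν = ∑ k, ∫ x in B k, β k * f k x ∂ν := by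
    rw [hdecomp]
    refine Finset.sum_congr rfl fun k _ => ?_
    refine setIntegral_congr_ae (hB_meas k) ?_
    filter_upwards [hmaxsum k] with x hx hxB
    rw [hsup]
    apply le_antisymm
    · exact Finset.sup'_le hne _ fun j _ => hx hxB j
    · exact Finset.le_sup' (fun j => β j * f j x) (Finset.mem_univ k)
  -- g α ≥ ∑ k ∫_{B k} α k f k
  have hα_ge : ∑ k, ∫ x in B k, α k * f k x ∂ν ≤ ∫ x, (⨆ j, α j * f j x) ∂ν := by
    rw [hdecomp]
    refine Finset.sum_le_sum fun k _ => ?_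
    refine setIntegral_mono_on ((hf_int k).const_mul (α k)).integrableOn
      ((hint α).integrableOn) (hB_meas k) fun x _ => ?_
    rw [hsup]
    exact Finset.le_sup' (fun j => α j * f j x) (Finset.mem_univ k)
  have key : ∑ j, (μ j (B j)).toReal * (α j - β j)
      = (∑ k, ∫ x in B k, α k * f k x ∂ν) - ∑ k, ∫ x in B k, β k * f k x ∂ν := by
    rw [← Finset.sum_sub_distrib]
    refine Finset.sum_congr rfl fun j _ => ?_
    rw [hu j, integral_const_mul, integral_const_mul, ← sub_mul, mul_comm]
  rw [key, hβ_eq]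
  exact sub_le_sub_right hα_ge _
end

section
/- Let D ⊆ ℝ^m (with the Euclidean norm) be a nonempty closed convex set, let f : ℝ^m → ℝ be convex, suppose f attains its minimum f* := min_{x ∈ D} f(x) on D and the set of minimizers D* := {x ∈ D : f(x) = f*} is bounded. Let γ : ℝ^m → ℝ^m satisfy f(y) − f(x) ≥ ⟨γ(x), y − x⟩ for all x, y ∈ D, and suppose there is G > 0 with ‖γ(x)‖ ≤ G for all x ∈ D. Let (s_t)_{t≥0} be positive reals with s_t → 0 and Σ_t s_t = ∞. For x^0 ∈ D define recursively x^{t+1} = p(x^t − s_t γ(x^t)), where p(z) denotes the unique point of D nearest to z. Then lim_{t→∞} min_{i ≤ t} f(x^i) = f*. -/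
/-!
Let `x*` be a minimizer. Projection onto the convex set `D` does not increase distances to points
of `D`, and the subgradient inequality turns the gradient step into the descent estimate
`‖x^{t+1} - x*‖² ≤ ‖x^t - x*‖² - 2 s_t (f(x^t) - f*) + s_t² G²`.
If `f(x^t) - f* ≥ ε` for all `t`, then once `s_t G² ≤ ε` the squared distance drops by at least
`ε s_t` per step, which is impossible since `∑ s_t = ∞`. Hence the iterates come arbitrarily close
to `f*` in value, and the running minimum, which never falls below `f*`, converges to `f*`.
-/

open Filter Topology RealInnerProductSpace

section InnerProductSpace

variable {F : Type*} [NormedAddCommGroup F] [InnerProductSpace ℝ F]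

theorem real_inner_sub_le_zero_of_forall_norm_sub_le {D : Set F} (hD : Convex ℝ D) {z q : F}
    (hq : q ∈ D) (hnear : ∀ y ∈ D, ‖q - z‖ ≤ ‖y - z‖) : ∀ w ∈ D, ⟪z - q, w - q⟫ ≤ 0 := by
  have : Nonempty D := ⟨⟨q, hq⟩⟩
  refine (norm_eq_iInf_iff_real_inner_le_zero hD hq).1 (le_antisymm ?_ ?_)
  · exact le_ciInf fun y => by simpa only [norm_sub_rev z] using hnear y y.2
  · exact ciInf_le (f := fun w : D => ‖z - w‖) ⟨0, Set.forall_mem_range.2 fun w => norm_nonneg _⟩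
      ⟨q, hq⟩

theorem sq_norm_sub_le_of_forall_norm_sub_le {D : Set F} (hD : Convex ℝ D) {z q w : F}
    (hq : q ∈ D) (hnear : ∀ y ∈ D, ‖q - z‖ ≤ ‖y - z‖) (hw : w ∈ D) :
    ‖q - w‖ ^ 2 ≤ ‖z - w‖ ^ 2 := by
  have hinner := real_inner_sub_le_zero_of_forall_norm_sub_le hD hq hnear w hw
  have hexpand := norm_sub_sq_real (z - q) (w - q)
  rw [sub_sub_sub_cancel_right] at hexpand
  rw [norm_sub_rev q w]
  nlinarith [sq_nonneg ‖z - q‖]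

theorem sq_norm_sub_smul_sub_le {x y g : F} {s c G : ℝ} (hs : 0 ≤ s)
    (hc : c ≤ ⟪g, x - y⟫) (hg : ‖g‖ ≤ G) :
    ‖x - s • g - y‖ ^ 2 ≤ ‖x - y‖ ^ 2 - 2 * s * c + s ^ 2 * G ^ 2 := by
  have hexpand : ‖x - s • g - y‖ ^ 2 = ‖x - y‖ ^ 2 - 2 * s * ⟪g, x - y⟫ + s ^ 2 * ‖g‖ ^ 2 := by
    rw [sub_right_comm, norm_sub_sq_real, real_inner_smul_right, real_inner_comm, norm_smul,
      Real.norm_eq_abs, mul_pow, sq_abs]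
    ring
  have hinner : 2 * s * c ≤ 2 * s * ⟪g, x - y⟫ := by gcongr
  have hnorm : s ^ 2 * ‖g‖ ^ 2 ≤ s ^ 2 * G ^ 2 := by gcongr
  linarith

end InnerProductSpace

theorem not_forall_le_sub_mul_of_tendsto_sum_atTop {a s : ℕ → ℝ} {ε : ℝ} {T : ℕ}
    (ha : ∀ t, 0 ≤ a t) (hε : 0 < ε)
    (hs : Tendsto (fun n => ∑ t ∈ Finset.range n, s t) atTop atTop) :
    ¬ ∀ t ≥ T, a (t + 1) ≤ a t - ε * s t := by
  intro hdesc
  set b : ℕ → ℝ := fun n => a n + ε * ∑ t ∈ Finset.range n, s t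
  have hb_le : ∀ n ≥ T, b n ≤ b T := by
    refine Nat.le_induction le_rfl fun n hn ih => ?_
    have := hdesc n hn
    simp only [b, Finset.sum_range_succ] at ih ⊢
    linarith
  have hb_top : Tendsto b atTop atTop :=
    tendsto_atTop_add_left_of_le _ 0 ha (hs.const_mul_atTop hε)
  obtain ⟨n, hnT, hn⟩ := ((eventually_ge_atTop T).and (hb_top.eventually_gt_atTop (b T))).exists
  exact (hb_le n hnT).not_gt hn

theorem exists_lt_of_le_sub_two_mul_add_sq_mul {a s e : ℕ → ℝ} {C : ℝ} (ha : ∀ t, 0 ≤ a t)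
    (hs_nonneg : ∀ t, 0 ≤ s t) (hs_lim : Tendsto s atTop (𝓝 0))
    (hs_div : Tendsto (fun n => ∑ t ∈ Finset.range n, s t) atTop atTop)
    (hdesc : ∀ t, a (t + 1) ≤ a t - 2 * s t * e t + s t ^ 2 * C) {ε : ℝ} (hε : 0 < ε) :
    ∃ t, e t < ε := by
  by_contra! he
  have hsC : Tendsto (fun t => s t * C) atTop (𝓝 0) := by simpa using hs_lim.mul_const C
  obtain ⟨T, hT⟩ := eventually_atTop.1 (hsC.eventually (gt_mem_nhds hε))
  refine not_forall_le_sub_mul_of_tendsto_sum_atTop (T := T) ha hε hs_div fun t (ht : T ≤ t) => ?_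
  have hstep : s t * (s t * C) ≤ s t * ε := mul_le_mul_of_nonneg_left (hT t ht).le (hs_nonneg t)
  have hgap : s t * ε ≤ s t * e t := mul_le_mul_of_nonneg_left (he t) (hs_nonneg t)
  linarith [hdesc t]

theorem tendsto_iInf_fin_succ_of_forall_le {g : ℕ → ℝ} {L : ℝ} (hle : ∀ t, L ≤ g t)
    (hlt : ∀ ε > 0, ∃ t, g t - L < ε) :
    Tendsto (fun t => ⨅ i : Fin (t + 1), g i) atTop (𝓝 L) := by
  refine tendsto_order.2 ⟨fun c hc => Eventually.of_forall fun t =>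
    hc.trans_le (le_ciInf fun i => hle i), fun c hc => ?_⟩
  obtain ⟨t₀, ht₀⟩ := hlt (c - L) (sub_pos.2 hc)
  filter_upwards [eventually_ge_atTop t₀] with t ht
  calc ⨅ i : Fin (t + 1), g i ≤ g (⟨t₀, Nat.lt_succ_of_le ht⟩ : Fin (t + 1)) :=
        ciInf_le (Finite.bddBelow_range _) _
    _ < c := by linarith

theorem projected_subgradient_convergence_general
    {m : ℕ}
    (D : Set (EuclideanSpace ℝ (Fin m)))
    (hDconv : Convex ℝ D)
    (f : EuclideanSpace ℝ (Fin m) → ℝ)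
    (xstar : EuclideanSpace ℝ (Fin m)) (hxstar : xstar ∈ D)
    (hmin : ∀ y ∈ D, f xstar ≤ f y)
    (γ : EuclideanSpace ℝ (Fin m) → EuclideanSpace ℝ (Fin m))
    (hγ : ∀ x ∈ D, ∀ y ∈ D, (inner ℝ (γ x) (y - x) : ℝ) ≤ f y - f x)
    (G : ℝ) (hγbdd : ∀ x ∈ D, ‖γ x‖ ≤ G)
    (s : ℕ → ℝ) (hs_pos : ∀ t, 0 < s t)
    (hs_lim : Tendsto s atTop (𝓝 0))
    (hs_div : Tendsto (fun n => ∑ t ∈ Finset.range n, s t) atTop atTop)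
    (p : EuclideanSpace ℝ (Fin m) → EuclideanSpace ℝ (Fin m))
    (hp_mem : ∀ z, p z ∈ D)
    (hp_nearest : ∀ z, ∀ y ∈ D, ‖p z - z‖ ≤ ‖y - z‖)
    (x : ℕ → EuclideanSpace ℝ (Fin m)) (hx0 : x 0 ∈ D)
    (hxrec : ∀ t, x (t + 1) = p (x t - s t • γ (x t))) :
    Tendsto (fun t => ⨅ i : Fin (t + 1), f (x i)) atTop (𝓝 (f xstar)) := by
  have hxD : ∀ t, x t ∈ D := by
    rintro (_ | t)
    exacts [hx0, hxrec t ▸ hp_mem _]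
  have hdesc : ∀ t, ‖x (t + 1) - xstar‖ ^ 2 ≤
      ‖x t - xstar‖ ^ 2 - 2 * s t * (f (x t) - f xstar) + s t ^ 2 * G ^ 2 := fun t => by
    have hsub : f (x t) - f xstar ≤ ⟪γ (x t), x t - xstar⟫ := by
      have := hγ (x t) (hxD t) xstar hxstar
      rw [← neg_sub, inner_neg_right] at this
      linarith
    rw [hxrec t]
    exact (sq_norm_sub_le_of_forall_norm_sub_le hDconv (hp_mem _) (hp_nearest _) hxstar).trans
      (sq_norm_sub_smul_sub_le (hs_pos t).le hsub (hγbdd _ (hxD t)))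
  refine tendsto_iInf_fin_succ_of_forall_le (g := fun t => f (x t)) (fun t => hmin _ (hxD t))
    fun ε hε => ?_
  exact exists_lt_of_le_sub_two_mul_add_sq_mul (a := fun t => ‖x t - xstar‖ ^ 2)
    (e := fun t => f (x t) - f xstar) (fun t => sq_nonneg _) (fun t => (hs_pos t).le) hs_lim hs_div
    hdesc hε

/-- Convergence of the projected subgradient method with a
diminishing step size rule: `min_{i ≤ t} f(x^i) → f* = min_D f`. -/
theorem projected_subgradient_convergence
    {m : ℕ}
    (D : Set (EuclideanSpace ℝ (Fin m))) (hDne : D.Nonempty)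
    (hDclosed : IsClosed D) (hDconv : Convex ℝ D)
    (f : EuclideanSpace ℝ (Fin m) → ℝ) (hf : ConvexOn ℝ Set.univ f)
    (xstar : EuclideanSpace ℝ (Fin m)) (hxstar : xstar ∈ D)
    (hmin : ∀ y ∈ D, f xstar ≤ f y)
    (hbdd : Bornology.IsBounded {x | x ∈ D ∧ ∀ y ∈ D, f x ≤ f y})
    (γ : EuclideanSpace ℝ (Fin m) → EuclideanSpace ℝ (Fin m))
    (hγ : ∀ x ∈ D, ∀ y ∈ D, (inner ℝ (γ x) (y - x) : ℝ) ≤ f y - f x)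
    (G : ℝ) (hG : 0 < G) (hγbdd : ∀ x ∈ D, ‖γ x‖ ≤ G)
    (s : ℕ → ℝ) (hs_pos : ∀ t, 0 < s t)
    (hs_lim : Tendsto s atTop (𝓝 0))
    (hs_div : Tendsto (fun n => ∑ t ∈ Finset.range n, s t) atTop atTop)
    (p : EuclideanSpace ℝ (Fin m) → EuclideanSpace ℝ (Fin m))
    (hp_mem : ∀ z, p z ∈ D)
    (hp_nearest : ∀ z, ∀ y ∈ D, ‖p z - z‖ ≤ ‖y - z‖)
    (x : ℕ → EuclideanSpace ℝ (Fin m)) (hx0 : x 0 ∈ D)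
    (hxrec : ∀ t, x (t + 1) = p (x t - s t • γ (x t))) :
    Tendsto (fun t => ⨅ i : Fin (t + 1), f (x i)) atTop (𝓝 (f xstar)) :=
  projected_subgradient_convergence_general D hDconv f xstar hxstar hmin γ hγ G hγbdd s hs_pos
    hs_lim hs_div p hp_mem hp_nearest x hx0 hxrec
end

section
/- Assume m ≥ 2, each μ_j is nonatomic, and (MAC) holds. Let α ∈ Δ_{m−1} with α_i = 0 for some index i, and let (A_1, …, A_m) be an m-partition of C with μ_i(A_i) > 0. Then there exists an m-partition (A'_1, …, A'_m) of C with Σ_{j=1}^m α_j μ_j(A'_j) > Σ_{j=1}^m α_j μ_j(A_j). In particular, no m-partition giving positive μ_i-measure to the i-th piece maximizes Σ_j α_j μ_j(·) when α_i = 0. -/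
open MeasureTheory Filter Topology

/-- Under nonatomicity and (MAC), if `α i = 0` then no m-partition
giving positive `μ i`-measure to the `i`-th piece maximizes `∑ j, α j * μ j (·)`:
a strictly better partition exists. -/
theorem zero_weight_positive_piece_not_optimal
    {C : Type} [MeasurableSpace C] {m : ℕ} (hm : 2 ≤ m)
    (μ : Fin m → Measure C) [∀ j, IsFiniteMeasure (μ j)]
    (hna : ∀ j (A : Set C), MeasurableSet A → 0 < μ j A →
      ∃ B, MeasurableSet B ∧ B ⊆ A ∧ 0 < μ j B ∧ 0 < μ j (A \ B))
    (hmac : ∀ j k (A : Set C), MeasurableSet A → 0 < μ j A → 0 < μ k A)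
    (α : Fin m → ℝ) (hα_nonneg : ∀ j, 0 ≤ α j) (hα_sum : ∑ j, α j = 1)
    (i : Fin m) (hαi : α i = 0)
    (A : Fin m → Set C)
    (hA_meas : ∀ j, MeasurableSet (A j))
    (hA_disj : ∀ j k, j ≠ k → Disjoint (A j) (A k))
    (hA_cover : (⋃ j, A j) = Set.univ)
    (hAi : 0 < μ i (A i)) :
    ∃ A' : Fin m → Set C,
      (∀ j, MeasurableSet (A' j)) ∧
      (∀ j k, j ≠ k → Disjoint (A' j) (A' k)) ∧
      (⋃ j, A' j) = Set.univ ∧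
      ∑ j, α j * (μ j (A j)).toReal < ∑ j, α j * (μ j (A' j)).toReal := by
  -- find k ≠ i with α k > 0
  obtain ⟨k, hk_pos, hki⟩ : ∃ k, 0 < α k ∧ k ≠ i := by
    by_contra h
    push_neg at h
    have : ∀ j, α j = 0 := by
      intro j
      rcases eq_or_ne j i with rfl | hj
      · exact hαi
      · rcases lt_or_eq_of_le (hα_nonneg j) with hp | hp
        · exact absurd (h j hp) hj
        · exact hp.symm
    simp [this] at hα_sum
  set A' : Fin m → Set C := fun j => if j = i then ∅ else if j = k then A k ∪ A i else A j with hA'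
  have hA'i : A' i = ∅ := by simp [hA']
  have hA'k : A' k = A k ∪ A i := by simp [hA', hki]
  have hA'other : ∀ j, j ≠ i → j ≠ k → A' j = A j := by
    intro j h1 h2; simp [hA', h1, h2]
  refine ⟨A', ?_, ?_, ?_, ?_⟩
  · intro j
    rcases eq_or_ne j i with rfl | h1
    · simp [hA'i]
    rcases eq_or_ne j k with h2 | h2
    · rw [h2, hA'k]; exact (hA_meas k).union (hA_meas i)
    · rw [hA'other j h1 h2]; exact hA_meas j
  · intro j l hjl
    have key : ∀ j, j ≠ i → j ≠ k → ∀ l, l ≠ j → Disjoint (A' k) (A' l) →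
        True := fun _ _ _ _ _ _ => trivial
    rcases eq_or_ne j i with rfl | hj1
    · simp [hA'i]
    rcases eq_or_ne l i with rfl | hl1
    · simp [hA'i]
    rcases eq_or_ne j k with hj2 | hj2
    · rw [hj2, hA'k, hA'other l hl1 (hj2 ▸ Ne.symm hjl)]
      exact Set.disjoint_union_left.mpr ⟨hA_disj k l (hj2 ▸ hjl), hA_disj i l (Ne.symm hl1)⟩
    rcases eq_or_ne l k with hl2 | hl2
    · rw [hl2, hA'k, hA'other j hj1 hj2]
      exact (Set.disjoint_union_left.mpr
        ⟨hA_disj k j (hl2 ▸ Ne.symm hjl), hA_disj i j (Ne.symm hj1)⟩).symm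
    · rw [hA'other j hj1 hj2, hA'other l hl1 hl2]
      exact hA_disj j l hjl
  · apply Set.eq_univ_of_univ_subset
    rw [← hA_cover]
    intro x hx
    obtain ⟨j, hj⟩ := Set.mem_iUnion.mp hx
    rcases eq_or_ne j i with rfl | hj1
    · exact Set.mem_iUnion.mpr ⟨k, by rw [hA'k]; exact Or.inr hj⟩
    rcases eq_or_ne j k with hj2 | hj2
    · exact Set.mem_iUnion.mpr ⟨k, by rw [hA'k]; exact Or.inl (hj2 ▸ hj)⟩
    · exact Set.mem_iUnion.mpr ⟨j, by rw [hA'other j hj1 hj2]; exact hj⟩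
  · have hkAi : 0 < μ k (A i) := hmac i k (A i) (hA_meas i) hAi
    apply Finset.sum_lt_sum
    · intro j _
      rcases eq_or_ne j i with rfl | hj1
      · simp [hαi]
      rcases eq_or_ne j k with hj2 | hj2
      · rw [hj2, hA'k]
        apply mul_le_mul_of_nonneg_left _ (hα_nonneg k)
        apply ENNReal.toReal_mono (measure_ne_top _ _)
        exact measure_mono Set.subset_union_left
      · rw [hA'other j hj1 hj2]
    · refine ⟨k, Finset.mem_univ k, ?_⟩
      rw [hA'k]
      apply mul_lt_mul_of_pos_left _ hk_pos
      rw [measure_union (hA_disj k i hki) (hA_meas i)]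
      apply ENNReal.toReal_lt_toReal (measure_ne_top _ _)
        (by exact ENNReal.add_ne_top.mpr ⟨measure_ne_top _ _, measure_ne_top _ _⟩) |>.mpr
      exact ENNReal.lt_add_right (measure_ne_top _ _) hkAi.ne'
end

section
/- Let μ_1, …, μ_k be finite measures on a measurable space C, each nonatomic, satisfying (MAC). Then for every measurable set A with μ_1(A) > 0 there exist pairwise disjoint measurable sets B_1, …, B_k with B_1 ∪ … ∪ B_k = A and μ_j(B_j) > 0 for every j = 1, …, k. -/
open MeasureTheory Filter Topology

lemma split_aux
    {C : Type} [MeasurableSpace C] {k : ℕ} (hk : 0 < k)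
    (μ : Fin k → Measure C)
    (hna : ∀ j (A : Set C), MeasurableSet A → 0 < μ j A →
      ∃ B, MeasurableSet B ∧ B ⊆ A ∧ 0 < μ j B ∧ 0 < μ j (A \ B))
    (hmac : ∀ j j' (A : Set C), MeasurableSet A → 0 < μ j A → 0 < μ j' A) :
    ∀ n : ℕ, 0 < n → ∀ A : Set C, MeasurableSet A → 0 < μ ⟨0, hk⟩ A →
      ∃ B : Fin n → Set C,
        (∀ i, MeasurableSet (B i)) ∧
        (∀ i i', i ≠ i' → Disjoint (B i) (B i')) ∧
        (⋃ i, B i) = A ∧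
        ∀ i j, 0 < μ j (B i) := by
  intro n
  induction n with
  | zero => exact fun h => absurd h (lt_irrefl 0)
  | succ m ih =>
    intro _ A hA hApos
    rcases Nat.eq_zero_or_pos m with hm | hm
    · subst hm
      refine ⟨fun _ => A, fun _ => hA, ?_, ?_, ?_⟩
      · intro i i' h; exact absurd (Fin.fin_one_eq_zero i ▸ Fin.fin_one_eq_zero i' ▸ rfl) h
      · exact Set.iUnion_const A
      · exact fun _ j => hmac ⟨0, hk⟩ j A hA hApos
    · obtain ⟨S, hS, hSA, hSpos, hASpos⟩ := hna ⟨0, hk⟩ A hA hApos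
      obtain ⟨B', hB'm, hB'd, hB'u, hB'pos⟩ := ih hm (A \ S) (hA.diff hS) hASpos
      have hsub : ∀ i, B' i ⊆ A \ S := fun i => hB'u ▸ Set.subset_iUnion B' i
      refine ⟨Fin.cases S B', ?_, ?_, ?_, ?_⟩
      · intro i
        exact Fin.cases hS hB'm i
      · intro i i' hne
        induction i using Fin.cases with
        | zero =>
          induction i' using Fin.cases with
          | zero => exact absurd rfl hne
          | succ i' =>
            simp only [Fin.cases_zero, Fin.cases_succ]
            exact (Set.disjoint_sdiff_right.mono_right (hsub i'))
        | succ i =>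
          induction i' using Fin.cases with
          | zero =>
            simp only [Fin.cases_zero, Fin.cases_succ]
            exact (Set.disjoint_sdiff_right.mono_right (hsub i)).symm
          | succ i' =>
            simp only [Fin.cases_succ]
            exact hB'd i i' (fun h => hne (by rw [h]))
      · have h1 : (⋃ i, Fin.cases S B' i : Set C) = S ∪ ⋃ j, B' j := by
          ext x
          simp [Fin.exists_fin_succ]
        rw [h1, hB'u, Set.union_diff_cancel hSA]
      · intro i j
        induction i using Fin.cases with
        | zero => exact hmac ⟨0, hk⟩ j S hS hSpos
        | succ i => exact hB'pos i j

/-- If `μ 1, …, μ k` are nonatomic finite measures satisfying (MAC),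
then every measurable set of positive `μ 1`-measure can be split into `k` pairwise
disjoint measurable pieces, each of positive measure for the corresponding measure. -/
theorem split_into_positive_pieces
    {C : Type} [MeasurableSpace C] {k : ℕ} (hk : 0 < k)
    (μ : Fin k → Measure C) [∀ j, IsFiniteMeasure (μ j)]
    (hna : ∀ j (A : Set C), MeasurableSet A → 0 < μ j A →
      ∃ B, MeasurableSet B ∧ B ⊆ A ∧ 0 < μ j B ∧ 0 < μ j (A \ B))
    (hmac : ∀ j j' (A : Set C), MeasurableSet A → 0 < μ j A → 0 < μ j' A)
    (A : Set C) (hA : MeasurableSet A) (hA_pos : 0 < μ ⟨0, hk⟩ A) :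
    ∃ B : Fin k → Set C,
      (∀ j, MeasurableSet (B j)) ∧
      (∀ j j', j ≠ j' → Disjoint (B j) (B j')) ∧
      (⋃ j, B j) = A ∧
      ∀ j, 0 < μ j (B j) := by
  obtain ⟨B, hm, hd, hu, hpos⟩ := split_aux hk μ hna hmac k hk A hA hA_pos
  exact ⟨B, hm, hd, hu, fun j => hpos j j⟩
end

section
/- Assume each μ_j is a probability measure (μ_j(C) = 1 for all j). Let α ∈ Δ_{m−1} and let (B_1, …, B_m) be a maxsum partition for α. Then Σ_{j=1}^m μ_j(B_j) ≥ 1; that is, every partition value vector has coordinate sum at least 1. -/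
open MeasureTheory Filter Topology

/-- For probability measures, every partition value vector of a
maxsum partition has coordinate sum at least 1. -/
theorem pvv_sum_ge_one
    {C : Type} [MeasurableSpace C] {m : ℕ}
    (ν : Measure C) [IsFiniteMeasure ν]
    (μ : Fin m → Measure C) [∀ j, IsProbabilityMeasure (μ j)]
    (f : Fin m → C → ℝ)
    (hf_nonneg : ∀ j x, 0 ≤ f j x)
    (hf_int : ∀ j, Integrable (f j) ν)
    (hdens : ∀ j (A : Set C), MeasurableSet A → (μ j A).toReal = ∫ x in A, f j x ∂ν)
    (α : Fin m → ℝ) (hα_nonneg : ∀ j, 0 ≤ α j) (hα_sum : ∑ j, α j = 1)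
    (B : Fin m → Set C)
    (hB_meas : ∀ i, MeasurableSet (B i))
    (hB_disj : ∀ i j, i ≠ j → Disjoint (B i) (B j))
    (hB_cover : (⋃ i, B i) = Set.univ)
    (hmaxsum : ∀ k, ∀ᵐ x ∂ν, x ∈ B k → ∀ h, α h * f h x ≤ α k * f k x) :
    1 ≤ ∑ j, (μ j (B j)).toReal := by
  classical
  have hm : (Finset.univ : Finset (Fin m)).Nonempty := by
    by_contra h
    rw [Finset.not_nonempty_iff_eq_empty] at h
    rw [h, Finset.sum_empty] at hα_sum
    norm_num at hα_sum
  obtain ⟨i₀, -, hi₀⟩ := Finset.exists_max_image Finset.univ α hm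
  have hi₀' : ∀ j, α j ≤ α i₀ := fun j => hi₀ j (Finset.mem_univ j)
  have hpos : 0 < α i₀ := by
    have hlt : ∑ j : Fin m, (0 : ℝ) < ∑ j, α j := by
      rw [hα_sum, Finset.sum_const_zero]; norm_num
    obtain ⟨j, -, hj⟩ := Finset.exists_lt_of_sum_lt hlt
    exact lt_of_lt_of_le hj (hi₀' j)
  have key : ∀ k, α i₀ * (μ i₀ (B k)).toReal ≤ α k * (μ k (B k)).toReal := by
    intro k
    rw [hdens i₀ (B k) (hB_meas k), hdens k (B k) (hB_meas k),
      ← integral_const_mul, ← integral_const_mul]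
    refine integral_mono_ae (((hf_int i₀).const_mul _).restrict)
      (((hf_int k).const_mul _).restrict) ?_
    exact (ae_restrict_iff' (hB_meas k)).mpr
      ((hmaxsum k).mono fun x hx hxB => hx hxB i₀)
  have hcover : ∀ h : Fin m, ∑ k, (μ h (B k)).toReal = 1 := by
    intro h
    have h1 : ∑ k, μ h (B k) = μ h Set.univ := by
      rw [← hB_cover, measure_iUnion (fun i j hij => hB_disj i j hij) hB_meas,
        tsum_fintype]
    have h2 := congrArg ENNReal.toReal h1
    rw [measure_univ] at h2
    rw [← ENNReal.toReal_sum (fun k _ => measure_ne_top _ _)]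
    exact h2
  have main : α i₀ * 1 ≤ α i₀ * ∑ j, (μ j (B j)).toReal := by
    calc α i₀ * 1 = ∑ k, α i₀ * (μ i₀ (B k)).toReal := by
          rw [← Finset.mul_sum, hcover i₀]
      _ ≤ ∑ k, α k * (μ k (B k)).toReal := Finset.sum_le_sum fun k _ => key k
      _ ≤ ∑ k, α i₀ * (μ k (B k)).toReal := Finset.sum_le_sum fun k _ =>
          mul_le_mul_of_nonneg_right (hi₀' k) ENNReal.toReal_nonneg
      _ = α i₀ * ∑ j, (μ j (B j)).toReal := (Finset.mul_sum _ _ _).symm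
  exact le_of_mul_le_mul_left main hpos
end

section
/- Assume each μ_j is a nonatomic finite measure on C. Then the partition range P := {(μ_1(A_1), …, μ_m(A_m)) ∈ ℝ^m : (A_1, …, A_m) is an m-partition of C} is a convex and compact subset of ℝ^m. -/
/-!
Put `ν = ∑ j, μ j`. A fuzzy partition is an `m`-tuple of functions `f j ≥ 0` in `L²(ν)` with
`∑ j, f j = 1`; viewed through the Riesz isomorphism in the weak-* dual, these form a convex set
that is compact by Banach–Alaoglu, and `f ↦ (∫ f j dμ j)_j = (⟪f j, dμ j/dν⟫)_j` is continuous and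
linear on it, so its image is convex and compact. This image is the partition range: by
Krein–Milman every fibre has an extreme point `f`, and the `f j` of an extreme point are the
indicators of a partition. Otherwise two coordinates `f a, f b` are both `≥ ε` on a set of positive measure; splitting that set
into `m + 1` pieces of positive measure (nonatomicity) yields a nonzero step function `g` with
`|g| ≤ ε` orthogonal to all the densities `dμ j/dν`, and moving `± g` from `f b` to `f a` stays in
the fibre, contradicting extremality.
-/

open MeasureTheory Filter Set Function
open scoped InnerProductSpace

theorem exists_eq_single_of_sum_eq_one {ι M : Type*} [Fintype ι] [DecidableEq ι]
    [AddCommMonoidWithOne M] [NeZero (1 : M)] {v : ι → M} (hsum : ∑ i, v i = 1)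
    (hv : Pairwise fun a b => v a = 0 ∨ v b = 0) : ∃ i, v = Pi.single i 1 := by
  obtain ⟨i, -, hi⟩ := Finset.exists_ne_zero_of_sum_ne_zero (hsum ▸ one_ne_zero)
  have hzero (j : ι) (hj : j ≠ i) : v j = 0 := (hv hj).resolve_right hi
  refine ⟨i, funext fun j => ?_⟩
  obtain rfl | hj := eq_or_ne j i
  · rw [Pi.single_eq_same, ← hsum, Finset.sum_eq_single j (fun k _ => hzero k) (by simp)]
  · rw [Pi.single_eq_of_ne hj, hzero j hj]

theorem Set.sum_indicator_apply_of_mem {α ι M : Type*} [Fintype ι] [AddCommMonoid M]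
    {B : ι → Set α} (hB : Pairwise (Disjoint on B)) (d : ι → M) {x : α} {i : ι} (hx : x ∈ B i) :
    ∑ j, (B j).indicator (fun _ => d j) x = d i := by
  rw [Finset.sum_eq_single_of_mem i (Finset.mem_univ i)
    fun j _ hji => indicator_of_notMem (fun hxj => disjoint_left.1 (hB hji) hxj hx) _,
    indicator_of_mem hx]

theorem exists_ne_zero_abs_le_inner_sum_smul_eq_zero {E ι κ : Type*} [NormedAddCommGroup E]
    [InnerProductSpace ℝ E] [Fintype ι] [Fintype κ] (hcard : Fintype.card κ < Fintype.card ι)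
    (v : ι → E) (u : κ → E) {ε : ℝ} (hε : 0 < ε) :
    ∃ d : ι → ℝ, d ≠ 0 ∧ (∀ i, |d i| ≤ ε) ∧ ∀ l, ⟪u l, ∑ i, d i • v i⟫_ℝ = 0 := by
  let L : (ι → ℝ) →ₗ[ℝ] κ → ℝ :=
    LinearMap.pi fun l => (innerₛₗ ℝ (u l)).comp (Fintype.linearCombination ℝ v)
  obtain ⟨d, hd, hd0⟩ := Submodule.exists_mem_ne_zero_of_ne_bot
    (LinearMap.ker_ne_bot_of_finrank_lt (f := L) (by simpa using hcard))
  have hnorm : 0 < ‖d‖ := norm_pos_iff.2 hd0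
  refine ⟨(ε / ‖d‖) • d, smul_ne_zero (by positivity) hd0, fun i => ?_, fun l => ?_⟩
  · calc |(ε / ‖d‖) • d i| = ε / ‖d‖ * ‖d i‖ := by
          rw [smul_eq_mul, abs_mul, abs_of_pos (by positivity), Real.norm_eq_abs]
      _ ≤ ε / ‖d‖ * ‖d‖ := by gcongr; exact norm_le_pi_norm d i
      _ = ε := div_mul_cancel₀ ε hnorm.ne'
  · have h := congrFun (LinearMap.mem_ker.1 hd) l
    simp only [L, LinearMap.pi_apply, LinearMap.comp_apply, Fintype.linearCombination_apply,
      innerₛₗ_apply_apply, Pi.zero_apply] at h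
    simp only [Pi.smul_apply, smul_eq_mul, mul_smul, ← Finset.smul_sum, inner_smul_right, h,
      mul_zero]

namespace WeakDual

theorem continuous_pi_eval {𝕜 E ι : Type*} [NontriviallyNormedField 𝕜] [NormedAddCommGroup E]
    [NormedSpace 𝕜 E] (u : ι → E) : Continuous fun (φ : ι → WeakDual 𝕜 E) j => φ j (u j) :=
  continuous_pi fun j => (eval_continuous (u j)).comp (continuous_apply j)

-- Instance search does not unfold `WeakDual` to the `WeakBilin` it is defined as.
instance {E : Type*} [NormedAddCommGroup E] [NormedSpace ℝ E] :
    LocallyConvexSpace ℝ (WeakDual ℝ E) :=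
  WeakBilin.locallyConvexSpace

variable {E : Type*} [NormedAddCommGroup E] [InnerProductSpace ℝ E] [CompleteSpace E]

noncomputable def rieszEquiv : E ≃ WeakDual ℝ E where
  toFun x := StrongDual.toWeakDual (InnerProductSpace.toDual ℝ E x)
  invFun w := (InnerProductSpace.toDual ℝ E).symm (toStrongDual w)
  left_inv x := by simp
  right_inv w := by simp

@[simp]
theorem rieszEquiv_apply_apply (x y : E) : rieszEquiv x y = ⟪x, y⟫_ℝ :=
  InnerProductSpace.toDual_apply_apply

@[simp]
theorem inner_rieszEquiv_symm (w : WeakDual ℝ E) (y : E) : ⟪rieszEquiv.symm w, y⟫_ℝ = w y :=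
  InnerProductSpace.toDual_symm_apply

theorem norm_rieszEquiv_symm (w : WeakDual ℝ E) : ‖rieszEquiv.symm w‖ = ‖toStrongDual w‖ :=
  (InnerProductSpace.toDual ℝ E).symm.norm_map _

theorem add_smul_rieszEquiv_apply_of_inner_eq_zero {ι : Type*} (ψ : ι → WeakDual ℝ E)
    (c : ι → ℝ) {u : ι → E} {g : E} (hg : ∀ l, ⟪u l, g⟫_ℝ = 0) (j : ι) :
    (ψ + fun j => c j • rieszEquiv g) j (u j) = ψ j (u j) := by
  change ψ j (u j) + c j • rieszEquiv g (u j) = ψ j (u j)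
  rw [rieszEquiv_apply_apply, real_inner_comm, hg j, smul_zero, add_zero]

end WeakDual

namespace MeasureTheory

open WeakDual

variable {C : Type*} [MeasurableSpace C] {ν : Measure C}

def Measure.IsNonatomic (ν : Measure C) : Prop :=
  ∀ A : Set C, MeasurableSet A → 0 < ν A →
    ∃ B, MeasurableSet B ∧ B ⊆ A ∧ 0 < ν B ∧ 0 < ν (A \ B)

theorem Measure.IsNonatomic.finsetSum {ι : Type*} {s : Finset ι} {μ : ι → Measure C}
    (h : ∀ i ∈ s, (μ i).IsNonatomic) : (∑ i ∈ s, μ i).IsNonatomic := by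
  intro A hA hpos
  rw [Measure.finsetSum_apply] at hpos
  obtain ⟨i, hi, hiA⟩ := Finset.exists_ne_zero_of_sum_ne_zero hpos.ne'
  have hle (S : Set C) : μ i S ≤ (∑ j ∈ s, μ j) S := by
    rw [Measure.finsetSum_apply]
    exact Finset.single_le_sum (fun j _ => (zero_le : 0 ≤ μ j S)) hi
  obtain ⟨B, hB, hBA, hBpos, hdiff⟩ := h i hi A hA (pos_iff_ne_zero.2 hiA)
  exact ⟨B, hB, hBA, hBpos.trans_le (hle B), hdiff.trans_le (hle _)⟩

theorem Measure.IsNonatomic.exists_pairwise_disjoint (h : ν.IsNonatomic) (n : ℕ) {A : Set C}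
    (hA : MeasurableSet A) (hpos : 0 < ν A) :
    ∃ B : Fin n → Set C, (∀ i, MeasurableSet (B i)) ∧ (∀ i, B i ⊆ A) ∧
      Pairwise (Disjoint on B) ∧ ∀ i, 0 < ν (B i) := by
  induction n generalizing A with
  | zero => exact ⟨Fin.elim0, fun i => i.elim0, fun i => i.elim0, fun i => i.elim0,
      fun i => i.elim0⟩
  | succ n ih =>
    obtain ⟨B₀, hB₀, hB₀A, hB₀pos, hrest⟩ := h A hA hpos
    obtain ⟨B, hB, hBA, hBdisj, hBpos⟩ := ih (hA.diff hB₀) hrest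
    have hB₀B (i : Fin n) : Disjoint B₀ (B i) := disjoint_sdiff_self_right.mono_right (hBA i)
    refine ⟨Fin.cons B₀ B, Fin.cases hB₀ hB, Fin.cases hB₀A fun i => (hBA i).trans sdiff_subset,
      ?_, Fin.cases hB₀pos hBpos⟩
    intro i j hij
    induction i using Fin.cases <;> induction j using Fin.cases
    · exact absurd rfl hij
    · exact hB₀B _
    · exact (hB₀B _).symm
    · exact hBdisj fun h => hij (congrArg Fin.succ h)

theorem exists_measure_setOf_ge_pos {f : C → ℝ} (h : 0 < ν {x | 0 < f x}) :
    ∃ ε > 0, 0 < ν {x | ε ≤ f x} := by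
  by_contra! hnull
  refine h.ne' (measure_mono_null (t := ⋃ n : ℕ, {x | 1 / ((n : ℝ) + 1) ≤ f x}) ?_
    (measure_iUnion_null fun n => nonpos_iff_eq_zero.1 (hnull _ Nat.one_div_pos_of_nat)))
  intro x hx
  obtain ⟨n, hn⟩ := exists_nat_one_div_lt (show 0 < f x from hx)
  exact mem_iUnion.2 ⟨n, hn.le⟩

theorem exists_partition_ae_eq {m : ℕ} [NeZero m] {T : Fin m → Set C}
    (hT : ∀ j, MeasurableSet (T j)) (h : ∀ᵐ x ∂ν, ∃! j, x ∈ T j) :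
    ∃ A : Fin m → Set C, (∀ j, MeasurableSet (A j)) ∧ Pairwise (Disjoint on A) ∧
      ⋃ j, A j = univ ∧ ∀ j, A j =ᵐ[ν] T j := by
  classical
  -- the last index absorbs the null set off which `T` is a partition
  set T' := update T ⊤ univ
  have hT' (j : Fin m) : MeasurableSet (T' j) := by
    by_cases hj : j = ⊤ <;> simp [T', hj, hT j]
  refine ⟨disjointed T', fun j => disjointedRec (fun _ i ht => ht.diff (hT' i)) (hT' j),
    disjoint_disjointed T', ?_, fun j => ?_⟩
  · rw [iUnion_disjointed]
    exact eq_univ_of_univ_subset (subset_iUnion_of_subset ⊤ (by simp [T']))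
  rw [eventuallyEq_set]
  filter_upwards [h] with x ⟨i, hi, huniq⟩
  simp only [disjointed_eq_inter_compl, mem_inter_iff, mem_iInter, mem_compl_iff, T', update_apply]
  constructor
  · rintro ⟨hxj, hlt⟩
    by_cases hj : j = ⊤
    · subst hj
      obtain rfl | hi_top := eq_or_ne i ⊤
      · exact hi
      · exact absurd (by simpa [hi_top] using hi) (hlt i (lt_top_iff_ne_top.2 hi_top))
    · simpa [hj] using hxj
  · intro hxj
    obtain rfl := huniq j hxj
    refine ⟨by split_ifs <;> trivial, fun k hk => ?_⟩
    simpa [hk.ne_top] using fun hxk => hk.ne (huniq k hxk)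

theorem L2.inner_nonneg_of_ae_nonneg {f g : Lp ℝ 2 ν} (hf : 0 ≤ᵐ[ν] f) (hg : 0 ≤ᵐ[ν] g) :
    0 ≤ ⟪f, g⟫_ℝ := by
  rw [L2.inner_def]
  refine integral_nonneg_of_ae ?_
  filter_upwards [hf, hg] with x hfx hgx
  exact mul_nonneg hgx hfx

section FiniteMeasure

variable [IsFiniteMeasure ν]

theorem L2.inner_const_one (g : Lp ℝ 2 ν) : ⟪Lp.const 2 ν (1 : ℝ), g⟫_ℝ = ∫ x, g x ∂ν := by
  rw [← indicatorConstLp_univ, L2.inner_indicatorConstLp_one, setIntegral_univ]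

theorem coeFn_sum_smul_indicatorConstLp {ι : Type*} [Fintype ι] {B : ι → Set C}
    (hB : ∀ i, MeasurableSet (B i)) (d : ι → ℝ) :
    ⇑(∑ i, d i • indicatorConstLp 2 (hB i) (measure_ne_top ν (B i)) (1 : ℝ))
      =ᵐ[ν] fun x => ∑ i, (B i).indicator (fun _ => d i) x := by
  filter_upwards [Lp.coeFn_fun_finsetSum (μ := ν) Finset.univ
      fun i => d i • indicatorConstLp 2 (hB i) (measure_ne_top ν (B i)) (1 : ℝ),
    ae_all_iff.2 fun i => Lp.coeFn_smul (d i) (indicatorConstLp 2 (hB i) _ (1 : ℝ)),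
    ae_all_iff.2 fun i => indicatorConstLp_coeFn (hs := hB i) (hμs := measure_ne_top ν (B i))
      (c := (1 : ℝ)) (p := 2)] with x hsum hsmul hind
  rw [hsum]
  refine Finset.sum_congr rfl fun i _ => ?_
  rw [hsmul i, Pi.smul_apply, hind i, smul_eq_mul]
  by_cases hxi : x ∈ B i <;> simp [hxi]

theorem Measure.IsNonatomic.exists_ne_zero_abs_le_inner_eq_zero (hν : ν.IsNonatomic)
    {h : C → ℝ} (hh : Measurable h) (hh0 : 0 ≤ᵐ[ν] h) (hpos : 0 < ν {x | 0 < h x})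
    {κ : Type*} [Fintype κ] (u : κ → Lp ℝ 2 ν) :
    ∃ g : Lp ℝ 2 ν, g ≠ 0 ∧ (∀ᵐ x ∂ν, |g x| ≤ h x) ∧ ∀ l, ⟪u l, g⟫_ℝ = 0 := by
  obtain ⟨ε, hε, hεpos⟩ := exists_measure_setOf_ge_pos hpos
  obtain ⟨B, hB, hBsub, hBdisj, hBpos⟩ := hν.exists_pairwise_disjoint (Fintype.card κ + 1)
    (measurableSet_le measurable_const hh) hεpos
  obtain ⟨d, hd0, hdε, horth⟩ := exists_ne_zero_abs_le_inner_sum_smul_eq_zero (by simp)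
    (fun i => indicatorConstLp 2 (hB i) (measure_ne_top ν (B i)) (1 : ℝ)) u hε
  have hg := coeFn_sum_smul_indicatorConstLp (ν := ν) hB d
  refine ⟨_, fun hg0 => ?_, ?_, horth⟩
  · obtain ⟨i, hi⟩ := Function.ne_iff.1 hd0
    refine (hBpos i).ne' (measure_eq_zero_iff_ae_notMem.2 ?_)
    filter_upwards [hg, hg0 ▸ Lp.coeFn_zero ℝ 2 ν] with x hx hx0 hxB
    rw [hx0, sum_indicator_apply_of_mem hBdisj d hxB] at hx
    exact hi hx.symm
  · filter_upwards [hg, hh0] with x hx hx0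
    rw [hx]
    by_cases hxB : ∃ i, x ∈ B i
    · obtain ⟨i, hxi⟩ := hxB
      rw [sum_indicator_apply_of_mem hBdisj d hxi]
      exact (hdε i).trans (hBsub i hxi)
    · push Not at hxB
      simpa [indicator_of_notMem (hxB _)] using hx0

theorem memLp_two_toReal_rnDeriv_of_le {μ : Measure C} (h : μ ≤ ν) :
    MemLp (fun x => (μ.rnDeriv ν x).toReal) 2 ν := by
  refine MemLp.of_bound (Measure.measurable_rnDeriv μ ν).ennreal_toReal.aestronglyMeasurable 1 ?_
  filter_upwards [Measure.rnDeriv_le_one_of_le h] with x hx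
  rw [Real.norm_eq_abs, abs_of_nonneg ENNReal.toReal_nonneg]
  exact ENNReal.toReal_le_of_le_ofReal zero_le_one (by simpa using hx)

noncomputable def rnDerivLp {μ : Measure C} (h : μ ≤ ν) : Lp ℝ 2 ν :=
  (memLp_two_toReal_rnDeriv_of_le h).toLp _

theorem inner_indicatorConstLp_one_rnDerivLp {μ : Measure C} (h : μ ≤ ν) {S : Set C}
    (hS : MeasurableSet S) :
    ⟪indicatorConstLp 2 hS (measure_ne_top ν S) (1 : ℝ), rnDerivLp h⟫_ℝ = (μ S).toReal := by
  have := isFiniteMeasure_of_le ν h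
  rw [L2.inner_indicatorConstLp_one, rnDerivLp, setIntegral_congr_ae hS
    ((memLp_two_toReal_rnDeriv_of_le h).coeFn_toLp.mono fun x hx _ => hx),
    Measure.setIntegral_toReal_rnDeriv (Measure.absolutelyContinuous_of_le h), measureReal_def]

end FiniteMeasure

variable {ι : Type*} [Fintype ι]

/-- The fuzzy partitions of unity in `L²(ν)`, i.e. tuples of functions `f j ≥ 0` with
`∑ j, f j = 1`, described by their action on `L²(ν)` so that the set is visibly weak-* closed. -/
def fuzzyPartitions (ν : Measure C) (ι : Type*) [Fintype ι] :
    Set (ι → WeakDual ℝ (Lp ℝ 2 ν)) :=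
  {φ | (∀ j (g : Lp ℝ 2 ν), 0 ≤ᵐ[ν] g → 0 ≤ φ j g) ∧ ∀ g : Lp ℝ 2 ν, ∑ j, φ j g = ∫ x, g x ∂ν}

theorem isClosed_fuzzyPartitions : IsClosed (fuzzyPartitions ν ι) := by
  have hev (j : ι) (g : Lp ℝ 2 ν) : Continuous fun φ : ι → WeakDual ℝ (Lp ℝ 2 ν) => φ j g :=
    (eval_continuous g).comp (continuous_apply j)
  simp only [fuzzyPartitions, ofPred_and, ofPred_forall]
  exact (isClosed_iInter fun j => isClosed_iInter fun g => isClosed_iInter fun _ =>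
      isClosed_le continuous_const (hev j g)).inter
    (isClosed_iInter fun g => isClosed_eq (continuous_finsetSum _ fun j _ => hev j g)
      continuous_const)

theorem convex_fuzzyPartitions : Convex ℝ (fuzzyPartitions ν ι) := by
  rintro φ ⟨hφ0, hφ1⟩ ψ ⟨hψ0, hψ1⟩ a b ha hb hab
  refine ⟨fun j g hg => ?_, fun g => ?_⟩
  · exact add_nonneg (mul_nonneg ha (hφ0 j g hg)) (mul_nonneg hb (hψ0 j g hg))
  · change ∑ j, (a * φ j g + b * ψ j g) = _
    rw [Finset.sum_add_distrib, ← Finset.mul_sum, ← Finset.mul_sum, hφ1, hψ1, ← add_mul, hab,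
      one_mul]

theorem add_smul_rieszEquiv_mem_fuzzyPartitions {φ : ι → WeakDual ℝ (Lp ℝ 2 ν)}
    (hφ : φ ∈ fuzzyPartitions ν ι) {c : ι → ℝ} (hc : ∑ j, c j = 0) {g : Lp ℝ 2 ν}
    (hg : ∀ j, ∀ᵐ x ∂ν, |c j * g x| ≤ rieszEquiv.symm (φ j) x) :
    φ + (fun j => c j • rieszEquiv g) ∈ fuzzyPartitions ν ι := by
  have happly (j : ι) (h : Lp ℝ 2 ν) :
      (φ + fun j => c j • rieszEquiv g) j h = φ j h + c j * ⟪g, h⟫_ℝ := by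
    simp only [Pi.add_apply, ← rieszEquiv_apply_apply]; rfl
  refine ⟨fun j h hh => ?_, fun h => ?_⟩
  · rw [happly, ← inner_rieszEquiv_symm, ← real_inner_smul_left, ← inner_add_left]
    refine L2.inner_nonneg_of_ae_nonneg ?_ hh
    filter_upwards [Lp.coeFn_add (rieszEquiv.symm (φ j)) (c j • g), Lp.coeFn_smul (c j) g, hg j]
      with x hadd hsmul hx
    rw [Pi.zero_apply, hadd, Pi.add_apply, hsmul, Pi.smul_apply, smul_eq_mul]
    linarith [neg_abs_le (c j * g x)]
  · simp only [happly, Finset.sum_add_distrib, ← Finset.sum_mul, hc, zero_mul, add_zero, hφ.2]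

section FiniteMeasure

variable [IsFiniteMeasure ν] {φ : ι → WeakDual ℝ (Lp ℝ 2 ν)}

theorem ae_nonneg_of_mem_fuzzyPartitions (hφ : φ ∈ fuzzyPartitions ν ι) (j : ι) :
    0 ≤ᵐ[ν] ⇑(rieszEquiv.symm (φ j)) := by
  refine ae_nonneg_of_forall_setIntegral_nonneg ((Lp.memLp _).integrable one_le_two)
    fun S hS hνS => ?_
  rw [← L2.inner_indicatorConstLp_one hS hνS.ne, real_inner_comm, inner_rieszEquiv_symm]
  refine hφ.1 j _ ?_
  filter_upwards [indicatorConstLp_coeFn (p := 2) (hs := hS) (hμs := hνS.ne) (c := (1 : ℝ))]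
    with x hx
  rw [hx]
  exact indicator_nonneg (fun _ _ => zero_le_one) x

theorem ae_sum_eq_one_of_mem_fuzzyPartitions (hφ : φ ∈ fuzzyPartitions ν ι) :
    ∀ᵐ x ∂ν, ∑ j, rieszEquiv.symm (φ j) x = 1 := by
  have hsum : ∑ j, rieszEquiv.symm (φ j) = Lp.const 2 ν (1 : ℝ) :=
    ext_inner_right ℝ fun g => by
      simp only [sum_inner, inner_rieszEquiv_symm, hφ.2, L2.inner_const_one]
  filter_upwards [Lp.coeFn_fun_finsetSum (μ := ν) Finset.univ fun j => rieszEquiv.symm (φ j),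
    Lp.coeFn_const (p := 2) (μ := ν) (c := (1 : ℝ))] with x hx hone
  rw [← hx, hsum, hone, Function.const_apply]

theorem norm_le_of_mem_fuzzyPartitions (hφ : φ ∈ fuzzyPartitions ν ι) (j : ι) :
    ‖rieszEquiv.symm (φ j)‖ ≤ ‖Lp.const 2 ν (1 : ℝ)‖ := by
  refine Lp.norm_le_norm_of_ae_le ?_
  filter_upwards [ae_all_iff.2 (ae_nonneg_of_mem_fuzzyPartitions hφ),
    ae_sum_eq_one_of_mem_fuzzyPartitions hφ,
    Lp.coeFn_const (p := 2) (μ := ν) (c := (1 : ℝ))] with x hnonneg hsum hone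
  rw [hone, Function.const_apply, norm_one, Real.norm_of_nonneg (hnonneg j), ← hsum]
  exact Finset.single_le_sum (fun i _ => hnonneg i) (Finset.mem_univ j)

theorem isCompact_fuzzyPartitions : IsCompact (fuzzyPartitions ν ι) := by
  refine (isCompact_univ_pi fun _ => isCompact_closedBall (𝕜 := ℝ) 0 ‖Lp.const 2 ν (1 : ℝ)‖)
    |>.of_isClosed_subset isClosed_fuzzyPartitions fun φ hφ j _ => ?_
  rw [mem_preimage, mem_closedBall_zero_iff, ← norm_rieszEquiv_symm]
  exact norm_le_of_mem_fuzzyPartitions hφ j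

theorem rieszEquiv_indicatorConstLp_mem_fuzzyPartitions {A : ι → Set C}
    (hA : ∀ j, MeasurableSet (A j)) (hdisj : Pairwise (Disjoint on A)) (hcover : ⋃ j, A j = univ) :
    (fun j => rieszEquiv (indicatorConstLp 2 (hA j) (measure_ne_top ν (A j)) (1 : ℝ))) ∈
      fuzzyPartitions ν ι := by
  refine ⟨fun j g hg => ?_, fun g => ?_⟩
  · rw [rieszEquiv_apply_apply, L2.inner_indicatorConstLp_one]
    exact setIntegral_nonneg_of_ae_restrict (ae_restrict_of_ae hg)
  · simp only [rieszEquiv_apply_apply, L2.inner_indicatorConstLp_one]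
    rw [← integral_iUnion_fintype hA hdisj
      fun j => ((Lp.memLp g).integrable one_le_two).integrableOn, hcover, setIntegral_univ]

theorem ae_eq_zero_or_eq_zero_of_mem_extremePoints (hν : ν.IsNonatomic) (u : ι → Lp ℝ 2 ν)
    {p : ι → ℝ} {ψ : ι → WeakDual ℝ (Lp ℝ 2 ν)}
    (hψ : ψ ∈ (fuzzyPartitions ν ι ∩ (fun φ j => φ j (u j)) ⁻¹' {p}).extremePoints ℝ)
    {a b : ι} (hab : a ≠ b) :
    ∀ᵐ x ∂ν, rieszEquiv.symm (ψ a) x = 0 ∨ rieszEquiv.symm (ψ b) x = 0 := by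
  classical
  obtain ⟨⟨hψK, hψp⟩, hext⟩ := mem_extremePoints.1 hψ
  set f := fun j => rieszEquiv.symm (ψ j)
  have hf0 := ae_nonneg_of_mem_fuzzyPartitions hψK
  by_contra hne
  have hpos : 0 < ν {x | 0 < min (f a x) (f b x)} := by
    refine pos_iff_ne_zero.2 fun hnull => hne ?_
    filter_upwards [measure_eq_zero_iff_ae_notMem.1 hnull, hf0 a, hf0 b] with x hx ha hb
    simp only [lt_min_iff, not_and_or, not_lt] at hx
    exact hx.imp (le_antisymm · ha) (le_antisymm · hb)
  obtain ⟨g, hg0, hgle, horth⟩ := hν.exists_ne_zero_abs_le_inner_eq_zero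
    ((Lp.stronglyMeasurable (f a)).measurable.min (Lp.stronglyMeasurable (f b)).measurable)
    (by filter_upwards [hf0 a, hf0 b] with x ha hb using le_min ha hb) hpos u
  set c : ι → ℝ := Pi.single a 1 - Pi.single b 1
  have hcg (j : ι) : ∀ᵐ x ∂ν, |c j * g x| ≤ f j x := by
    filter_upwards [hgle, hf0 j] with x hgx hfj
    obtain rfl | hja := eq_or_ne j a
    · simpa [c, hab] using hgx.trans (min_le_left _ _)
    obtain rfl | hjb := eq_or_ne j b
    · simpa [c, hab.symm] using hgx.trans (min_le_right _ _)
    · simpa [c, hja, hjb] using hfj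
  set χ : ι → WeakDual ℝ (Lp ℝ 2 ν) := fun j => c j • rieszEquiv g
  have hmem (s : ℝ) (hs : |s| = 1) :
      ψ + s • χ ∈ fuzzyPartitions ν ι ∩ (fun φ j => φ j (u j)) ⁻¹' {p} := by
    have hsχ : s • χ = fun j => (s • c) j • rieszEquiv g := by funext j; simp [χ, smul_smul]
    rw [hsχ]
    refine ⟨add_smul_rieszEquiv_mem_fuzzyPartitions hψK (by simp [c, ← Finset.mul_sum])
      fun j => by simpa [abs_mul, hs, mul_assoc] using hcg j, ?_⟩
    rw [mem_preimage, mem_singleton_iff, ← hψp]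
    exact funext (add_smul_rieszEquiv_apply_of_inner_eq_zero ψ _ horth)
  obtain ⟨hplus, -⟩ := hext _ (hmem 1 abs_one) _ (hmem (-1) (by simp))
    ⟨1 / 2, 1 / 2, by norm_num, by norm_num, by norm_num, by module⟩
  have hgg : χ a g = 0 := by rw [show χ = 0 by simpa using hplus]; rfl
  simp only [χ, c, Pi.sub_apply, Pi.single_eq_same, Pi.single_eq_of_ne hab, sub_zero, one_smul,
    rieszEquiv_apply_apply, inner_self_eq_zero] at hgg
  exact hg0 hgg

theorem exists_partition_of_mem_fuzzyPartitions {m : ℕ} [NeZero m]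
    {ψ : Fin m → WeakDual ℝ (Lp ℝ 2 ν)} (hψ : ψ ∈ fuzzyPartitions ν (Fin m))
    (hpure : ∀ a b, a ≠ b → ∀ᵐ x ∂ν, rieszEquiv.symm (ψ a) x = 0 ∨ rieszEquiv.symm (ψ b) x = 0) :
    ∃ A : Fin m → Set C, ∃ hA : ∀ j, MeasurableSet (A j), Pairwise (Disjoint on A) ∧
      ⋃ j, A j = univ ∧
      ∀ j, ψ j = rieszEquiv (indicatorConstLp 2 (hA j) (measure_ne_top ν (A j)) (1 : ℝ)) := by
  set f := fun j => rieszEquiv.symm (ψ j)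
  have hsingle : ∀ᵐ x ∂ν, ∃ i, (fun j => f j x) = Pi.single i 1 := by
    filter_upwards [ae_sum_eq_one_of_mem_fuzzyPartitions hψ,
      ae_all_iff.2 fun a => ae_all_iff.2 fun b => eventually_imp_distrib_left.2 (hpure a b)]
      with x hsum hpair
    exact exists_eq_single_of_sum_eq_one hsum hpair
  have hT (j : Fin m) : MeasurableSet {x | f j x ≠ 0} :=
    (Lp.stronglyMeasurable (f j)).measurable (measurableSet_singleton 0).compl
  obtain ⟨A, hA, hdisj, hcover, hAT⟩ := exists_partition_ae_eq hT <| hsingle.mono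
    fun x ⟨i, hi⟩ => by
      have hfx (j : Fin m) : f j x = (Pi.single i 1 : Fin m → ℝ) j := congrFun hi j
      refine ⟨i, by simp [hfx], fun j hj => by_contra fun hji => hj ?_⟩
      rw [hfx, Pi.single_eq_of_ne hji]
  refine ⟨A, hA, hdisj, hcover, fun j => rieszEquiv.symm_apply_eq.1 (Lp.ext ?_)⟩
  filter_upwards [hsingle, indicatorConstLp_coeFn (p := 2) (hs := hA j)
    (hμs := measure_ne_top ν (A j)) (c := (1 : ℝ)),
    indicator_ae_eq_of_ae_eq_set (f := fun _ => (1 : ℝ)) (hAT j)] with x ⟨i, hi⟩ hind hAx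
  have hfj : f j x = (Pi.single i 1 : Fin m → ℝ) j := congrFun hi j
  change f j x = _
  rw [hind, hAx]
  obtain rfl | hji := eq_or_ne j i
  · simp [hfj]
  · simp [hfj, hji]

end FiniteMeasure

def partitionRange (μ : ι → Measure C) : Set (ι → ℝ) :=
  {p | ∃ A : ι → Set C, (∀ i, MeasurableSet (A i)) ∧ Pairwise (Disjoint on A) ∧
    ⋃ i, A i = univ ∧ p = fun j => (μ j (A j)).toReal}

theorem partitionRange_eq_image_fuzzyPartitions [IsFiniteMeasure ν] (hν : ν.IsNonatomic)
    {m : ℕ} [NeZero m] {μ : Fin m → Measure C} (hle : ∀ j, μ j ≤ ν) :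
    partitionRange μ = (fun φ j => φ j (rnDerivLp (hle j))) '' fuzzyPartitions ν (Fin m) := by
  refine Subset.antisymm ?_ ?_
  · rintro _ ⟨A, hA, hdisj, hcover, rfl⟩
    refine ⟨_, rieszEquiv_indicatorConstLp_mem_fuzzyPartitions hA hdisj hcover, funext fun j => ?_⟩
    dsimp only
    rw [rieszEquiv_apply_apply, inner_indicatorConstLp_one_rnDerivLp]
  · rintro _ ⟨φ, hφ, rfl⟩
    obtain ⟨ψ, hψ⟩ := (isCompact_fuzzyPartitions.inter_right
      (isClosed_singleton.preimage (continuous_pi_eval _))).extremePoints_nonempty ⟨φ, hφ, rfl⟩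
    obtain ⟨A, hA, hdisj, hcover, hψA⟩ := exists_partition_of_mem_fuzzyPartitions hψ.1.1
      fun a b hab => ae_eq_zero_or_eq_zero_of_mem_extremePoints hν _ hψ hab
    refine ⟨A, hA, hdisj, hcover, ?_⟩
    rw [← hψ.1.2]
    funext j
    dsimp only
    rw [hψA j, rieszEquiv_apply_apply, inner_indicatorConstLp_one_rnDerivLp]

end MeasureTheory

/-- For nonatomic finite measures, the partition range
`P = {(μ 1 (A 1), …, μ m (A m)) : A an m-partition of C}` is convex and compact. -/
theorem partition_range_convex_compact
    {C : Type} [MeasurableSpace C] {m : ℕ}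
    (μ : Fin m → Measure C) [∀ j, IsFiniteMeasure (μ j)]
    (hna : ∀ j (A : Set C), MeasurableSet A → 0 < μ j A →
      ∃ B, MeasurableSet B ∧ B ⊆ A ∧ 0 < μ j B ∧ 0 < μ j (A \ B)) :
    Convex ℝ {p : Fin m → ℝ | ∃ A : Fin m → Set C,
        (∀ i, MeasurableSet (A i)) ∧
        (∀ i j, i ≠ j → Disjoint (A i) (A j)) ∧
        (⋃ i, A i) = Set.univ ∧
        p = fun j => (μ j (A j)).toReal} ∧
    IsCompact {p : Fin m → ℝ | ∃ A : Fin m → Set C,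
        (∀ i, MeasurableSet (A i)) ∧
        (∀ i j, i ≠ j → Disjoint (A i) (A j)) ∧
        (⋃ i, A i) = Set.univ ∧
        p = fun j => (μ j (A j)).toReal} := by
  change Convex ℝ (partitionRange μ) ∧ IsCompact (partitionRange μ)
  obtain rfl | hm := m.eq_zero_or_pos
  · have hsub : (partitionRange μ).Subsingleton := fun p _ q _ => Subsingleton.elim p q
    exact ⟨hsub.convex, hsub.isCompact⟩
  have : NeZero m := ⟨hm.ne'⟩
  have hle (j : Fin m) : μ j ≤ ∑ i, μ i :=
    Finset.single_le_sum (fun i _ => Measure.zero_le (μ i)) (Finset.mem_univ j)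
  rw [partitionRange_eq_image_fuzzyPartitions (Measure.IsNonatomic.finsetSum fun j _ => hna j) hle]
  exact ⟨convex_fuzzyPartitions.is_linear_image ⟨fun _ _ => rfl, fun _ _ => rfl⟩,
    isCompact_fuzzyPartitions.image (WeakDual.continuous_pi_eval _)⟩
end
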